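/- arXiv:math/0402140 — 5 statements merged into one kernel-verified Lean document; each statement's English description precedes it below -/
import Mathlib

section
/- If c₁ and c₂ are ad-nilpotent ideals of the Borel subalgebra b of a complex simple Lie algebra g and their weights coincide, |c₁| = |c₂|, then c₁ = c₂. -/
/-!
STATEMENT 0 (Panyushev, "Normalizers of ad-nilpotent ideals", Prop. 2.2):
If `c₁`, `c₂` are ad-nilpotent ideals of the Borel subalgebra `b` of a complex
simple Lie algebra `g` and `|c₁| = |c₂|`, then `c₁ = c₂`.

We model the situation via the root system of `g`: an ad-nilpotent ideal of `b`
is the same thing as an upper ideal `I` of the poset of positive roots `Δ⁺`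
(the ideal is `⊕_{γ∈I} g_γ`), and its weight is `|c| = Σ_{γ∈I} γ`.
The root-system data of a complex simple Lie algebra is axiomatized in the
structure `RootSystemData` below (a finite reduced crystallographic root system
in a euclidean space, together with a base `Π` and the corresponding set of
positive roots `Δ⁺`).
-/

open scoped RealInnerProductSpace

/-- Axiomatization of the root system (with a fixed base and positive system)
of a complex simple Lie algebra: a finite, reduced, crystallographic root
system, invariant under its reflections, in a euclidean vector space `V`,
together with the set `Pi` of simple roots and the set `Δpos` of positive
roots. -/
structure RootSystemData (V : Type*) [NormedAddCommGroup V] [InnerProductSpace ℝ V]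
    [FiniteDimensional ℝ V] where
  /-- the set of all roots -/
  Δ : Finset V
  /-- the set of simple roots -/
  Pi : Finset V
  /-- the set of positive roots -/
  Δpos : Finset V
  zero_not_mem : (0 : V) ∉ Δ
  neg_mem : ∀ ⦃α⦄, α ∈ Δ → -α ∈ Δ
  reflect_mem : ∀ ⦃α⦄, α ∈ Δ → ∀ ⦃β⦄, β ∈ Δ → β - (2 * ⟪β, α⟫ / ⟪α, α⟫) • α ∈ Δ
  crystallographic : ∀ ⦃α⦄, α ∈ Δ → ∀ ⦃β⦄, β ∈ Δ → ∃ n : ℤ, 2 * ⟪β, α⟫ = n * ⟪α, α⟫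
  reduced : ∀ ⦃α⦄, α ∈ Δ → ∀ t : ℝ, t • α ∈ Δ → t = 1 ∨ t = -1
  Pi_subset : Pi ⊆ Δpos
  Pi_indep : LinearIndependent ℝ (Subtype.val : {x : V // x ∈ Pi} → V)
  Pi_span : Submodule.span ℝ (Pi : Set V) = ⊤
  Δpos_subset : Δpos ⊆ Δ
  mem_Δpos_iff : ∀ ⦃γ⦄, γ ∈ Δ →
    (γ ∈ Δpos ↔ ∃ c : V → ℕ, γ = ∑ α ∈ Pi, (c α : ℝ) • α)
  pos_or_neg : ∀ ⦃γ⦄, γ ∈ Δ → γ ∈ Δpos ∨ -γ ∈ Δpos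

namespace RootSystemData

variable {V : Type*} [NormedAddCommGroup V] [InnerProductSpace ℝ V]
  [FiniteDimensional ℝ V] (R : RootSystemData V)

/-- An upper ideal of the root poset `(Δ⁺, ≼)`: a subset of `Δ⁺` such that if
`γ ∈ I`, `μ ∈ Δ⁺` and `γ + μ` is a root, then `γ + μ ∈ I`.  Upper ideals
correspond bijectively to the ad-nilpotent ideals `c = ⊕_{γ∈I} g_γ` of the
Borel subalgebra `b`. -/
def IsUpperIdeal (I : Finset V) : Prop :=
  I ⊆ R.Δpos ∧ ∀ γ ∈ I, ∀ μ ∈ R.Δpos, γ + μ ∈ R.Δ → γ + μ ∈ I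

end RootSystemData

/-- The weight `|c| = Σ_{γ ∈ I_c} γ` of an ad-nilpotent ideal. -/
def idealWeight {V : Type*} [NormedAddCommGroup V] [InnerProductSpace ℝ V]
    [FiniteDimensional ℝ V] (I : Finset V) : V := ∑ γ ∈ I, γ

/-! If `|c₁| = |c₂|`, the sets `I₁ \ I₂` and `I₂ \ I₁` have the same sum `ν`. For `γ ∈ I₁ \ I₂`
and `μ ∈ I₂ \ I₁` we have `⟪γ, μ⟫ ≤ 0`: otherwise `γ - μ` is a root, and whichever of `±(γ - μ)`
is positive puts `γ` into `I₂` or `μ` into `I₁`. Hence `⟪ν, ν⟫ ≤ 0`, so `ν = 0`; and a sum of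
positive roots vanishes only if it is empty, because the height is positive on positive roots. -/

lemma eq_of_real_inner_self_le_inner {F : Type*} [NormedAddCommGroup F] [InnerProductSpace ℝ F]
    {x y : F} (hx : ⟪x, x⟫ ≤ ⟪x, y⟫) (hy : ⟪y, y⟫ ≤ ⟪x, y⟫) : x = y :=
  sub_eq_zero.mp <| real_inner_self_nonpos.mp <| by rw [real_inner_sub_sub_self]; linarith

lemma Finset.sum_eq_zero_of_sum_eq_sum_of_inner_nonpos {F : Type*} [NormedAddCommGroup F]
    [InnerProductSpace ℝ F] {A B : Finset F} (hAB : ∑ x ∈ A, x = ∑ y ∈ B, y)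
    (hneg : ∀ x ∈ A, ∀ y ∈ B, ⟪x, y⟫ ≤ 0) : ∑ x ∈ A, x = 0 := by
  refine real_inner_self_nonpos.mp ?_
  calc ⟪∑ x ∈ A, x, ∑ x ∈ A, x⟫ = ∑ x ∈ A, ∑ y ∈ B, ⟪x, y⟫ := by
        nth_rw 2 [hAB]; rw [sum_inner]; simp only [inner_sum]
    _ ≤ 0 := Finset.sum_nonpos fun x hx => Finset.sum_nonpos fun y hy => hneg x hx y hy

namespace RootSystemData

variable {V : Type*} [NormedAddCommGroup V] [InnerProductSpace ℝ V] [FiniteDimensional ℝ V]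
  (R : RootSystemData V)

noncomputable def simpleBasis : Module.Basis R.Pi ℝ V :=
  .mk R.Pi_indep (by rw [Subtype.range_coe_subtype]; exact R.Pi_span.ge)

noncomputable def height : V →ₗ[ℝ] ℝ :=
  R.simpleBasis.constr ℝ fun _ => 1

lemma height_of_mem_Pi {α : V} (hα : α ∈ R.Pi) : R.height α = 1 := by
  have := R.simpleBasis.constr_basis ℝ (fun _ => (1 : ℝ)) ⟨α, hα⟩
  rwa [simpleBasis, Module.Basis.mk_apply] at this

variable {R}

lemma ne_zero_of_mem {γ : V} (hγ : γ ∈ R.Δ) : γ ≠ 0 :=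
  fun h => R.zero_not_mem (h ▸ hγ)

lemma height_pos {γ : V} (hγ : γ ∈ R.Δpos) : 0 < R.height γ := by
  obtain ⟨c, rfl⟩ := (R.mem_Δpos_iff (R.Δpos_subset hγ)).mp hγ
  have hheight : R.height (∑ α ∈ R.Pi, (c α : ℝ) • α) = ∑ α ∈ R.Pi, (c α : ℝ) := by
    simp only [map_sum, map_smul, smul_eq_mul]
    exact Finset.sum_congr rfl fun α hα => by rw [R.height_of_mem_Pi hα, mul_one]
  rw [hheight]
  refine (Finset.sum_nonneg fun α _ => Nat.cast_nonneg _).lt_of_ne fun h => ?_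
  have hc : ∀ α ∈ R.Pi, (c α : ℝ) = 0 :=
    (Finset.sum_eq_zero_iff_of_nonneg fun α _ => Nat.cast_nonneg _).mp h.symm
  refine ne_zero_of_mem (R.Δpos_subset hγ) (Finset.sum_eq_zero fun α hα => ?_)
  rw [hc α hα, zero_smul]

lemma eq_empty_of_sum_eq_zero {A : Finset V} (hA : A ⊆ R.Δpos) (hsum : ∑ γ ∈ A, γ = 0) :
    A = ∅ := by
  by_contra hne
  have := Finset.sum_pos (fun γ hγ => height_pos (hA hγ)) (Finset.nonempty_iff_ne_empty.mpr hne)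
  rw [← map_sum, hsum, map_zero] at this
  exact this.false

lemma sub_mem_of_two_mul_inner_eq {γ μ : V} (hγ : γ ∈ R.Δ) (hμ : μ ∈ R.Δ)
    (h : 2 * ⟪γ, μ⟫ = ⟪μ, μ⟫) : γ - μ ∈ R.Δ := by
  have hμμ : ⟪μ, μ⟫ ≠ 0 := inner_self_ne_zero.mpr (ne_zero_of_mem hμ)
  have := R.reflect_mem hμ hγ
  rwa [h, div_self hμμ, one_smul] at this

lemma two_mul_inner_eq_or_inner_self_le {α β : V} (hα : α ∈ R.Δ) (hβ : β ∈ R.Δ)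
    (hpos : 0 < ⟪β, α⟫) : 2 * ⟪β, α⟫ = ⟪α, α⟫ ∨ ⟪α, α⟫ ≤ ⟪β, α⟫ := by
  obtain ⟨n, hn⟩ := R.crystallographic hα hβ
  have hαα : 0 < ⟪α, α⟫ := real_inner_self_pos.mpr (ne_zero_of_mem hα)
  have hn0 : (0 : ℝ) < n := pos_of_mul_pos_left (hn ▸ by linarith) hαα.le
  obtain hn1 | hn2 : n = 1 ∨ 2 ≤ n := by
    have : 0 < n := by exact_mod_cast hn0
    omega
  · left
    rw [hn, hn1, Int.cast_one, one_mul]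
  · right
    have : (2 : ℝ) ≤ n := by exact_mod_cast hn2
    nlinarith

lemma sub_mem_of_inner_pos {γ μ : V} (hγ : γ ∈ R.Δ) (hμ : μ ∈ R.Δ) (hne : γ ≠ μ)
    (hpos : 0 < ⟪γ, μ⟫) : γ - μ ∈ R.Δ := by
  rcases R.two_mul_inner_eq_or_inner_self_le hμ hγ hpos with h | hμμ
  · exact R.sub_mem_of_two_mul_inner_eq hγ hμ h
  rw [← real_inner_comm] at hpos
  rcases R.two_mul_inner_eq_or_inner_self_le hγ hμ hpos with h | hγγ
  · simpa using R.neg_mem (R.sub_mem_of_two_mul_inner_eq hμ hγ h)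
  · -- both Cartan integers are at least `2`, which forces `‖γ - μ‖² ≤ 0`
    rw [real_inner_comm γ μ] at hγγ
    exact absurd (eq_of_real_inner_self_le_inner hγγ hμμ) hne

lemma IsUpperIdeal.mem_of_sub_mem_Δpos {I : Finset V} (hI : R.IsUpperIdeal I) {γ μ : V}
    (hμ : μ ∈ I) (hγ : γ ∈ R.Δ) (hγμ : γ - μ ∈ R.Δpos) : γ ∈ I := by
  simpa using hI.2 μ hμ (γ - μ) hγμ (by simpa using hγ)

lemma inner_nonpos_of_mem_sdiff [DecidableEq V] {I₁ I₂ : Finset V} (h₁ : R.IsUpperIdeal I₁)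
    (h₂ : R.IsUpperIdeal I₂) {γ μ : V} (hγ : γ ∈ I₁ \ I₂) (hμ : μ ∈ I₂ \ I₁) :
    ⟪γ, μ⟫ ≤ 0 := by
  obtain ⟨hγ₁, hγ₂⟩ := Finset.mem_sdiff.mp hγ
  obtain ⟨hμ₂, hμ₁⟩ := Finset.mem_sdiff.mp hμ
  have hγΔ := R.Δpos_subset (h₁.1 hγ₁)
  have hμΔ := R.Δpos_subset (h₂.1 hμ₂)
  by_contra! hpos
  rcases R.pos_or_neg (R.sub_mem_of_inner_pos hγΔ hμΔ (ne_of_mem_of_not_mem hμ₂ hγ₂).symm hpos)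
    with hγμ | hμγ
  · exact hγ₂ (h₂.mem_of_sub_mem_Δpos hμ₂ hγΔ hγμ)
  · exact hμ₁ (h₁.mem_of_sub_mem_Δpos hγ₁ hμΔ (by rwa [neg_sub] at hμγ))

end RootSystemData

/-- If two ad-nilpotent ideals of the Borel subalgebra of a
complex simple Lie algebra have the same weight, `|c₁| = |c₂|`, then they are
equal. -/
theorem weight_injective_of_upperIdeal
    {V : Type*} [NormedAddCommGroup V] [InnerProductSpace ℝ V] [FiniteDimensional ℝ V]
    (R : RootSystemData V) (I₁ I₂ : Finset V)
    (h₁ : R.IsUpperIdeal I₁) (h₂ : R.IsUpperIdeal I₂)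
    (h : idealWeight I₁ = idealWeight I₂) :
    I₁ = I₂ := by
  classical
  have hsdiff : ∑ γ ∈ I₁ \ I₂, γ = ∑ μ ∈ I₂ \ I₁, μ := Finset.sum_sdiff_eq_sum_sdiff_iff.mpr h
  have hzero : ∑ γ ∈ I₁ \ I₂, γ = 0 :=
    Finset.sum_eq_zero_of_sum_eq_sum_of_inner_nonpos hsdiff
      fun _ hγ _ hμ => RootSystemData.inner_nonpos_of_mem_sdiff h₁ h₂ hγ hμ
  have h₁₂ : I₁ \ I₂ = ∅ :=
    RootSystemData.eq_empty_of_sum_eq_zero (Finset.sdiff_subset.trans h₁.1) hzero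
  have h₂₁ : I₂ \ I₁ = ∅ :=
    RootSystemData.eq_empty_of_sum_eq_zero (Finset.sdiff_subset.trans h₂.1) (hsdiff ▸ hzero)
  exact Finset.Subset.antisymm (Finset.sdiff_eq_empty_iff_subset.mp h₁₂)
    (Finset.sdiff_eq_empty_iff_subset.mp h₂₁)
end

section
/- Let w ∈ Ŵ be a dominant element of the affine Weyl group. Then for every simple root α ∈ Π: (i) (|N(w)|, α) ≤ 0; and (ii) (|N(w)|, α) = 0 if and only if w(α) is an affine simple root, i.e. w(α) ∈ Π̂. -/
open scoped RealInnerProductSpace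
open scoped Classical

set_option linter.unusedSectionVars false

noncomputable section

variable {V : Type*} [NormedAddCommGroup V] [InnerProductSpace ℝ V] [FiniteDimensional ℝ V]

/-- `θ` is the highest root: `θ ∈ Δ⁺` and `γ ≼ θ` for every positive root `γ`. -/
def RootSystemData.IsHighestRoot (R : RootSystemData V) (θ : V) : Prop :=
  θ ∈ R.Δpos ∧ ∀ γ ∈ R.Δpos, ∃ c : V → ℕ, θ - γ = ∑ α ∈ R.Pi, (c α : ℝ) • α

/-- The extended space `V̂ = V ⊕ ℝδ ⊕ ℝλ`, with `δ = (0,1,0)` and `λ = (0,0,1)`. -/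
abbrev AffSpace (V : Type*) := V × ℝ × ℝ

/-- The extension of the inner product to `V̂`:
`(δ,V) = (λ,V) = (δ,δ) = (λ,λ) = 0` and `(δ,λ) = 1`. -/
def affForm (x y : AffSpace V) : ℝ := ⟪x.1, y.1⟫ + x.2.1 * y.2.2 + x.2.2 * y.2.1

/-- The basic imaginary root `δ`. -/
def affDelta (V : Type*) [NormedAddCommGroup V] [InnerProductSpace ℝ V] : AffSpace V :=
  (0, 1, 0)

/-- The element `λ`, with `(δ, λ) = 1`. -/
def affLambda (V : Type*) [NormedAddCommGroup V] [InnerProductSpace ℝ V] : AffSpace V :=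
  (0, 0, 1)

/-- The canonical embedding `V → V̂`. -/
def affIota (v : V) : AffSpace V := (v, 0, 0)

lemma affForm_add_left (x y z : AffSpace V) :
    affForm (x + y) z = affForm x z + affForm y z := by
  simp [affForm, inner_add_left]; ring

lemma affForm_smul_left (a : ℝ) (x z : AffSpace V) :
    affForm (a • x) z = a * affForm x z := by
  simp [affForm, real_inner_smul_left]; ring

/-- The reflection of `V̂` in (the hyperplane orthogonal to) `β`, as a linear map:
`x ↦ x - (x, β∨) β`. -/
def affReflectMap (β : AffSpace V) : AffSpace V →ₗ[ℝ] AffSpace V where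
  toFun x := x - (2 * affForm x β / affForm β β) • β
  map_add' x y := by
    try dsimp only
    rw [affForm_add_left, mul_add, add_div, add_smul]
    abel
  map_smul' a x := by
    dsimp only [RingHom.id_apply]
    rw [affForm_smul_left, smul_sub, smul_smul]
    congr 2
    ring

lemma affReflectMap_involutive (β : AffSpace V) :
    Function.Involutive (affReflectMap (V := V) β) := by
  intro x
  show (affReflectMap β) ((affReflectMap β) x) = x
  simp only [affReflectMap, LinearMap.coe_mk, AddHom.coe_mk]
  set c := affForm β β with hc0
  set t := 2 * affForm x β / c with ht
  have hF : affForm (x - t • β) β = affForm x β - t * c := by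
    have h1 : x - t • β = x + (-t) • β := by rw [neg_smul]; abel
    rw [h1, affForm_add_left, affForm_smul_left]; ring
  have key : 2 * affForm (x - t • β) β / c = -t := by
    rw [hF, ht]
    by_cases hc : c = 0
    · simp [hc]
    · field_simp
      ring
  rw [key, neg_smul]
  abel

/-- The reflection of `V̂` in `β`, as a linear automorphism. -/
def affReflect (β : AffSpace V) : AffSpace V ≃ₗ[ℝ] AffSpace V :=
  LinearEquiv.ofLinear (affReflectMap β) (affReflectMap β)
    (LinearMap.ext fun x => affReflectMap_involutive β x)
    (LinearMap.ext fun x => affReflectMap_involutive β x)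

/-- The set `Π̂ = Π ∪ {α₀}` of affine simple roots, where `α₀ = δ - θ`. -/
def affSimpleRoots (R : RootSystemData V) (θ : V) : Set (AffSpace V) :=
  (fun α => affIota α) '' (R.Pi : Set V) ∪ {affDelta V - affIota θ}

/-- The set `Δ̂⁺ = Δ⁺ ∪ {μ + kδ : μ ∈ Δ, k ≥ 1}` of positive affine roots. -/
def affPosRoots (R : RootSystemData V) : Set (AffSpace V) :=
  (fun μ => affIota μ) '' (R.Δpos : Set V) ∪
    {x | ∃ μ ∈ R.Δ, ∃ k : ℕ, 1 ≤ k ∧ x = affIota μ + (k : ℝ) • affDelta V}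

/-- The affine Weyl group `Ŵ`, realized through its linear action on `V̂`:
the subgroup of `GL(V̂)` generated by the reflections in the affine simple roots. -/
def affWeylGroup (R : RootSystemData V) (θ : V) :
    Subgroup (AffSpace V ≃ₗ[ℝ] AffSpace V) :=
  Subgroup.closure (affReflect '' affSimpleRoots R θ)

/-- `N(w) = {μ ∈ Δ̂⁺ : w(μ) ∈ -Δ̂⁺}`. -/
def affInversionSet (R : RootSystemData V) (w : AffSpace V ≃ₗ[ℝ] AffSpace V) :
    Set (AffSpace V) :=
  {x | x ∈ affPosRoots R ∧ -(w x) ∈ affPosRoots R}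

/-- `|N(w)| = Σ_{μ ∈ N(w)} μ` (a finite sum whenever `w ∈ Ŵ`). -/
def affInversionSum (R : RootSystemData V) (w : AffSpace V ≃ₗ[ℝ] AffSpace V) :
    AffSpace V :=
  ∑ᶠ x ∈ affInversionSet R w, x

/-- `w ∈ Ŵ` is dominant if `w(α) ∈ Δ̂⁺` for every `α ∈ Π`. -/
def IsDominant (R : RootSystemData V) (w : AffSpace V ≃ₗ[ℝ] AffSpace V) : Prop :=
  ∀ α ∈ R.Pi, w (affIota α) ∈ affPosRoots R


/-!
The key identity is `|N(w)| = ρ̂ - w⁻¹ ρ̂`, where `ρ̂` pairs with every affine simple root `β`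
to `(β, β) / 2`. It follows by induction on `w`: left multiplication by a simple reflection `s_b`
changes `N(w)` by the single root `±w⁻¹ b`, and `s_b ρ̂ = ρ̂ - b`. By invariance of the form,
`(|N(w)|, α) = (α, α) / 2 - (ρ̂, w α)`, and `2 (|N(w)|, α)` is an integer multiple of `(α, α)`
since affine roots pair integrally with `α∨`. For dominant `w` the root `w α` is positive, so
`(ρ̂, w α) > 0`, hence `(ρ̂, w α) ≥ (α, α) / 2`, which is (i). If equality holds but `w α` is not
simple, then `(w α, b) > 0` for some affine simple root `b`; the root `s_b w α` is still positive
but `(ρ̂, s_b w α) < (α, α) / 2`, contradicting the same bound for `s_b w`.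
-/

section AffForm

lemma affForm_comm (x y : AffSpace V) : affForm x y = affForm y x := by
  simp only [affForm, real_inner_comm]; ring

lemma affForm_add_right (x y z : AffSpace V) :
    affForm x (y + z) = affForm x y + affForm x z := by
  rw [affForm_comm, affForm_add_left, affForm_comm y, affForm_comm z]

lemma affForm_smul_right (a : ℝ) (x z : AffSpace V) :
    affForm x (a • z) = a * affForm x z := by
  rw [affForm_comm, affForm_smul_left, affForm_comm z]

lemma affForm_sub_left (x y z : AffSpace V) :
    affForm (x - y) z = affForm x z - affForm y z := by
  rw [sub_eq_add_neg, ← neg_one_smul ℝ y, affForm_add_left, affForm_smul_left]; ring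

lemma affForm_sub_right (x y z : AffSpace V) :
    affForm x (y - z) = affForm x y - affForm x z := by
  rw [affForm_comm, affForm_sub_left, affForm_comm y, affForm_comm z]

def affBilin : LinearMap.BilinForm ℝ (AffSpace V) :=
  LinearMap.mk₂ ℝ affForm affForm_add_left affForm_smul_left affForm_add_right
    affForm_smul_right

lemma affForm_sum_right {ι : Type*} (s : Finset ι) (x : AffSpace V) (f : ι → AffSpace V) :
    affForm x (∑ i ∈ s, f i) = ∑ i ∈ s, affForm x (f i) :=
  map_sum (affBilin x) f s

@[simp]
lemma affForm_mk_zero (μ ν : V) (k l : ℝ) :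
    affForm ((μ, k, 0) : AffSpace V) (ν, l, 0) = ⟪μ, ν⟫ := by
  simp [affForm]

lemma affForm_affIota (μ ν : V) : affForm (affIota μ) (affIota ν) = ⟪μ, ν⟫ :=
  affForm_mk_zero μ ν 0 0

end AffForm

section Reflections

lemma affReflect_apply (b x : AffSpace V) :
    affReflect b x = x - (2 * affForm x b / affForm b b) • b := rfl

lemma affReflect_self {b : AffSpace V} (hb : affForm b b ≠ 0) : affReflect b b = -b := by
  rw [affReflect_apply, mul_div_assoc, div_self hb, mul_one, two_smul]; abel

lemma affReflect_affReflect (b x : AffSpace V) : affReflect b (affReflect b x) = x :=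
  affReflectMap_involutive b x

lemma affReflect_mul_self (b : AffSpace V) : affReflect b * affReflect b = 1 :=
  LinearEquiv.ext (affReflect_affReflect b)

lemma affReflect_inv (b : AffSpace V) : (affReflect b)⁻¹ = affReflect b :=
  inv_eq_of_mul_eq_one_right (affReflect_mul_self b)

lemma affForm_affReflect (b x y : AffSpace V) :
    affForm (affReflect b x) (affReflect b y) = affForm x y := by
  rcases eq_or_ne (affForm b b) 0 with hb | hb
  · simp [affReflect_apply, hb]
  · simp only [affReflect_apply, affForm_sub_left, affForm_sub_right, affForm_smul_left,
      affForm_smul_right, affForm_comm b y]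
    field_simp
    ring

end Reflections

section AffineRoots

/-- The real affine roots `Δ̂ = {μ + kδ : μ ∈ Δ, k ∈ ℤ}`. -/
def affRoots (R : RootSystemData V) : Set (AffSpace V) :=
  {x | ∃ μ ∈ R.Δ, ∃ k : ℤ, x = (μ, (k : ℝ), 0)}

variable (R : RootSystemData V)

lemma RootSystemData.inner_self_pos {μ : V} (hμ : μ ∈ R.Δ) : 0 < ⟪μ, μ⟫ :=
  real_inner_self_pos.2 fun h => R.zero_not_mem (h ▸ hμ)

lemma RootSystemData.mem_Δ_of_mem_Pi {a : V} (ha : a ∈ R.Pi) : a ∈ R.Δ :=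
  R.Δpos_subset (R.Pi_subset ha)

lemma RootSystemData.eq_zero_of_sum_smul_eq_zero {c : V → ℝ}
    (h : ∑ a ∈ R.Pi, c a • a = 0) : ∀ a ∈ R.Pi, c a = 0 :=
  (linearIndepOn_finset_iff (v := id)).mp R.Pi_indep c h

lemma RootSystemData.neg_notMem_Δpos {μ : V} (hμ : μ ∈ R.Δpos) : -μ ∉ R.Δpos := by
  intro hμ'
  obtain ⟨c, hc⟩ := (R.mem_Δpos_iff (R.Δpos_subset hμ)).1 hμ
  obtain ⟨c', hc'⟩ := (R.mem_Δpos_iff (R.Δpos_subset hμ')).1 hμ'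
  have hzero : ∑ a ∈ R.Pi, ((c a : ℝ) + c' a) • a = 0 := by
    simp only [add_smul, Finset.sum_add_distrib, ← hc, ← hc', add_neg_cancel]
  have hμ0 : μ = 0 := by
    rw [hc]
    refine Finset.sum_eq_zero fun a ha => ?_
    have : c a + c' a = 0 := by exact_mod_cast R.eq_zero_of_sum_smul_eq_zero hzero a ha
    simp [show c a = 0 by omega]
  exact R.zero_not_mem (hμ0 ▸ R.Δpos_subset hμ)

lemma mem_affPosRoots_iff {x : AffSpace V} :
    x ∈ affPosRoots R ↔ (∃ μ ∈ R.Δpos, x = (μ, 0, 0)) ∨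
      ∃ μ ∈ R.Δ, ∃ k : ℕ, 1 ≤ k ∧ x = (μ, (k : ℝ), 0) := by
  simp [affPosRoots, affIota, affDelta, eq_comm]

lemma affPosRoots_subset_affRoots : affPosRoots R ⊆ affRoots R := by
  intro x hx
  rcases (mem_affPosRoots_iff R).1 hx with ⟨μ, hμ, rfl⟩ | ⟨μ, hμ, k, -, rfl⟩
  · exact ⟨μ, R.Δpos_subset hμ, 0, by simp⟩
  · exact ⟨μ, hμ, k, by simp⟩

lemma mem_affPosRoots_or_neg_mem {x : AffSpace V} (hx : x ∈ affRoots R) :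
    x ∈ affPosRoots R ∨ -x ∈ affPosRoots R := by
  obtain ⟨μ, hμ, k, rfl⟩ := hx
  simp only [mem_affPosRoots_iff, Prod.neg_mk, neg_zero]
  rcases lt_trichotomy k 0 with hk | rfl | hk
  · refine .inr (.inr ⟨-μ, R.neg_mem hμ, (-k).toNat, by omega, ?_⟩)
    rw [← Int.cast_natCast, Int.toNat_of_nonneg (by omega), Int.cast_neg]
  · rcases R.pos_or_neg hμ with h | h
    · exact .inl (.inl ⟨μ, h, by simp⟩)
    · exact .inr (.inl ⟨-μ, h, by simp⟩)
  · refine .inl (.inr ⟨μ, hμ, k.toNat, by omega, ?_⟩)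
    rw [← Int.cast_natCast, Int.toNat_of_nonneg hk.le]

lemma neg_notMem_affPosRoots {x : AffSpace V} (hx : x ∈ affPosRoots R) :
    -x ∉ affPosRoots R := by
  intro hx'
  rw [mem_affPosRoots_iff] at hx hx'
  rcases hx with ⟨μ, hμ, rfl⟩ | ⟨μ, -, k, hk, rfl⟩ <;>
    rcases hx' with ⟨ν, hν, h⟩ | ⟨ν, -, l, hl, h⟩ <;>
    simp only [Prod.neg_mk, neg_zero, Prod.mk.injEq, neg_eq_iff_eq_neg] at h
  · exact R.neg_notMem_Δpos hμ (by simpa [h.1] using hν)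
  · exact absurd h.2.1 (by positivity)
  · exact absurd h.2.1 (by positivity)
  · have : (0 : ℝ) < k + l := by positivity
    linarith [h.2.1]

lemma zero_notMem_affPosRoots : (0 : AffSpace V) ∉ affPosRoots R := fun h =>
  neg_notMem_affPosRoots R h (by rwa [neg_zero])

variable {R}

lemma affForm_self_pos {x : AffSpace V} (hx : x ∈ affRoots R) : 0 < affForm x x := by
  obtain ⟨μ, hμ, k, rfl⟩ := hx
  simpa using R.inner_self_pos hμ

lemma exists_int_two_mul_affForm {x b : AffSpace V} (hx : x ∈ affRoots R)
    (hb : b ∈ affRoots R) : ∃ n : ℤ, 2 * affForm x b = n * affForm b b := by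
  obtain ⟨μ, hμ, k, rfl⟩ := hx
  obtain ⟨β, hβ, m, rfl⟩ := hb
  simpa using R.crystallographic hβ hμ

lemma affReflect_mem_affRoots {x b : AffSpace V} (hx : x ∈ affRoots R)
    (hb : b ∈ affRoots R) : affReflect b x ∈ affRoots R := by
  obtain ⟨n, hn⟩ := exists_int_two_mul_affForm hx hb
  have hcoeff : 2 * affForm x b / affForm b b = n := by
    rw [hn, mul_div_cancel_right₀ _ (affForm_self_pos hb).ne']
  obtain ⟨μ, hμ, k, rfl⟩ := hx
  obtain ⟨β, hβ, m, rfl⟩ := hb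
  refine ⟨μ - (2 * ⟪μ, β⟫ / ⟪β, β⟫) • β, R.reflect_mem hβ hμ, k - n * m, ?_⟩
  rw [affReflect_apply, hcoeff]
  simp only [affForm_mk_zero] at hcoeff
  rw [hcoeff]
  ext <;> simp

lemma eq_one_or_eq_neg_one_of_smul_mem_affRoots {x : AffSpace V} (hx : x ∈ affRoots R)
    {t : ℝ} (ht : t • x ∈ affRoots R) : t = 1 ∨ t = -1 := by
  obtain ⟨μ, hμ, k, rfl⟩ := hx
  obtain ⟨ν, hν, l, h⟩ := ht
  simp only [Prod.smul_mk, smul_zero, Prod.mk.injEq] at h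
  exact R.reduced hμ t (h.1 ▸ hν)

lemma RootSystemData.IsHighestRoot.mem_Δ {θ : V} (hθ : R.IsHighestRoot θ) : θ ∈ R.Δ :=
  R.Δpos_subset hθ.1

lemma affSimpleRoots_subset_affPosRoots {θ : V} (hθ : θ ∈ R.Δ) :
    affSimpleRoots R θ ⊆ affPosRoots R := by
  rintro x (⟨a, ha, rfl⟩ | rfl)
  · exact (mem_affPosRoots_iff R).2 (.inl ⟨a, R.Pi_subset ha, rfl⟩)
  · refine (mem_affPosRoots_iff R).2 (.inr ⟨-θ, R.neg_mem hθ, 1, le_rfl, ?_⟩)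
    simp [affDelta, affIota]

lemma affSimpleRoots_subset_affRoots {θ : V} (hθ : θ ∈ R.Δ) :
    affSimpleRoots R θ ⊆ affRoots R :=
  (affSimpleRoots_subset_affPosRoots hθ).trans (affPosRoots_subset_affRoots R)

lemma affForm_self_pos_of_mem_affSimpleRoots {θ : V} (hθ : θ ∈ R.Δ) {b : AffSpace V}
    (hb : b ∈ affSimpleRoots R θ) : 0 < affForm b b :=
  affForm_self_pos (affSimpleRoots_subset_affRoots hθ hb)

end AffineRoots

section AffSimpleRoots

variable (R : RootSystemData V) (θ : V)

def affSimpleFinset : Finset (AffSpace V) :=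
  insert (affDelta V - affIota θ) (R.Pi.image affIota)

lemma coe_affSimpleFinset : (affSimpleFinset R θ : Set (AffSpace V)) = affSimpleRoots R θ := by
  rw [affSimpleFinset, Finset.coe_insert, Finset.coe_image, Set.insert_eq, Set.union_comm]
  rfl

lemma affDelta_sub_affIota_notMem_image : affDelta V - affIota θ ∉ R.Pi.image affIota := by
  simp [affDelta, affIota]

lemma sum_affSimpleFinset {M : Type*} [AddCommMonoid M] (f : AffSpace V → M) :
    ∑ b ∈ affSimpleFinset R θ, f b = f (affDelta V - affIota θ) + ∑ a ∈ R.Pi, f (affIota a) := by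
  rw [affSimpleFinset, Finset.sum_insert (affDelta_sub_affIota_notMem_image R θ),
    Finset.sum_image fun a _ b _ h => congrArg Prod.fst h]

lemma linearIndepOn_affSimpleFinset :
    LinearIndepOn ℝ id (affSimpleFinset R θ : Set (AffSpace V)) := by
  rw [linearIndepOn_finset_iff]
  intro c hc
  rw [sum_affSimpleFinset] at hc
  have h₀ : c (affDelta V - affIota θ) = 0 := by
    simpa [affDelta, affIota, Prod.snd_sum] using congrArg (fun x => x.2.1) hc
  rw [h₀, zero_smul, zero_add] at hc
  have hPi : ∑ a ∈ R.Pi, c (affIota a) • a = 0 := by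
    simpa [affIota, Prod.fst_sum] using congrArg Prod.fst hc
  simp only [affSimpleFinset, Finset.mem_insert, Finset.mem_image]
  rintro b (rfl | ⟨a, ha, rfl⟩)
  · exact h₀
  · exact R.eq_zero_of_sum_smul_eq_zero hPi a ha

variable {R θ}

lemma RootSystemData.exists_nat_comb_add_smul {θ : V} (hθ : R.IsHighestRoot θ) {μ : V}
    (hμ : μ ∈ R.Δ) {k : ℕ} (hk : 1 ≤ k) :
    ∃ d : V → ℕ, μ + (k : ℝ) • θ = ∑ a ∈ R.Pi, (d a : ℝ) • a := by
  obtain ⟨c, j, hμk⟩ : ∃ (c : V → ℕ) (j : ℕ),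
      μ + (k : ℝ) • θ = ∑ a ∈ R.Pi, (c a : ℝ) • a + (j : ℝ) • θ := by
    rcases R.pos_or_neg hμ with h | h
    · obtain ⟨c, hc⟩ := (R.mem_Δpos_iff hμ).1 h
      exact ⟨c, k, by rw [hc]⟩
    · obtain ⟨c, hc⟩ := hθ.2 _ h
      exact ⟨c, k - 1, by rw [← hc, Nat.cast_sub hk]; module⟩
  obtain ⟨cθ, hcθ⟩ := (R.mem_Δpos_iff hθ.mem_Δ).1 hθ.1
  refine ⟨fun a => c a + j * cθ a, ?_⟩
  rw [hμk, hcθ, Finset.smul_sum, ← Finset.sum_add_distrib]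
  refine Finset.sum_congr rfl fun a _ => ?_
  push_cast
  rw [add_smul, mul_smul]

lemma exists_nat_comb_of_mem_affPosRoots (hθ : R.IsHighestRoot θ) {x : AffSpace V}
    (hx : x ∈ affPosRoots R) :
    ∃ c : AffSpace V → ℕ, x = ∑ b ∈ affSimpleFinset R θ, (c b : ℝ) • b := by
  obtain ⟨d, n, rfl⟩ : ∃ (d : V → ℕ) (n : ℕ),
      x = (∑ a ∈ R.Pi, (d a : ℝ) • a - (n : ℝ) • θ, (n : ℝ), 0) := by
    rcases (mem_affPosRoots_iff R).1 hx with ⟨μ, hμ, rfl⟩ | ⟨μ, hμ, k, hk, rfl⟩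
    · obtain ⟨d, hd⟩ := (R.mem_Δpos_iff (R.Δpos_subset hμ)).1 hμ
      exact ⟨d, 0, by simp [hd]⟩
    · obtain ⟨d, hd⟩ := R.exists_nat_comb_add_smul hθ hμ hk
      exact ⟨d, k, by simp [← hd]⟩
  refine ⟨fun b => if b = affDelta V - affIota θ then n else d b.1, ?_⟩
  rw [sum_affSimpleFinset]
  ext <;> simp [affIota, affDelta, Prod.fst_sum, Prod.snd_sum, sub_eq_neg_add]

lemma affReflect_mem_affPosRoots (hθ : R.IsHighestRoot θ) {b x : AffSpace V}
    (hb : b ∈ affSimpleRoots R θ) (hx : x ∈ affPosRoots R) (hxb : x ≠ b) :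
    affReflect b x ∈ affPosRoots R := by
  have hbR := affSimpleRoots_subset_affRoots hθ.mem_Δ hb
  refine (mem_affPosRoots_or_neg_mem R (affReflect_mem_affRoots
    (affPosRoots_subset_affRoots R hx) hbR)).resolve_right fun hneg => hxb ?_
  set t := 2 * affForm x b / affForm b b
  obtain ⟨c, hc⟩ := exists_nat_comb_of_mem_affPosRoots hθ hx
  obtain ⟨c', hc'⟩ := exists_nat_comb_of_mem_affPosRoots hθ hneg
  have hb' : b ∈ affSimpleFinset R θ := by rwa [← coe_affSimpleFinset] at hb
  -- `x + (-s_b x) = t • b`, so by independence `x` only has a coefficient at `b`.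
  have hsum : ∑ β ∈ affSimpleFinset R θ, ((c β : ℝ) + c' β - if β = b then t else 0) • β = 0 := by
    simp only [sub_smul, add_smul, ite_smul, zero_smul, Finset.sum_sub_distrib,
      Finset.sum_add_distrib, ← hc, ← hc', Finset.sum_ite_eq', hb', if_true, affReflect_apply]
    abel
  have hcoeff := linearIndepOn_finset_iff.mp (linearIndepOn_affSimpleFinset R θ) _ hsum
  have hx_smul : x = (c b : ℝ) • b := by
    rw [hc, Finset.sum_eq_single b _ fun h => absurd hb' h]
    intro β hβ hβb
    have h := hcoeff β hβ
    rw [if_neg hβb, sub_zero] at h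
    have : c β + c' β = 0 := by exact_mod_cast h
    simp [show c β = 0 by omega]
  rcases eq_one_or_eq_neg_one_of_smul_mem_affRoots hbR
    (hx_smul ▸ affPosRoots_subset_affRoots R hx) with h | h
  · rw [hx_smul, h, one_smul]
  · linarith [Nat.cast_nonneg (α := ℝ) (c b)]

lemma exists_affForm_pos_of_mem_affPosRoots (hθ : R.IsHighestRoot θ) {x : AffSpace V}
    (hx : x ∈ affPosRoots R) : ∃ b ∈ affSimpleRoots R θ, 0 < affForm x b := by
  obtain ⟨c, hc⟩ := exists_nat_comb_of_mem_affPosRoots hθ hx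
  have hpos := affForm_self_pos (affPosRoots_subset_affRoots R hx)
  nth_rewrite 2 [hc] at hpos
  simp only [affForm_sum_right, affForm_smul_right] at hpos
  obtain ⟨b, hb, hlt⟩ := Finset.exists_lt_of_sum_lt (f := fun _ => (0 : ℝ))
    (g := fun β => (c β : ℝ) * affForm x β) (by simpa using hpos)
  exact ⟨b, coe_affSimpleFinset R θ ▸ hb, pos_of_mul_pos_right hlt (Nat.cast_nonneg _)⟩

end AffSimpleRoots

section Rho

variable (R : RootSystemData V) (θ : V)

def RootSystemData.simpleBasis_s3 : Module.Basis R.Pi ℝ V :=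
  .mk R.Pi_indep (by simp [R.Pi_span])

def RootSystemData.rho : V :=
  (InnerProductSpace.toDual ℝ V).symm
    (R.simpleBasis_s3.constr ℝ fun a => ⟪(a : V), a⟫ / 2).toContinuousLinearMap

lemma RootSystemData.simpleBasis_apply (a : R.Pi) : R.simpleBasis_s3 a = a :=
  Module.Basis.mk_apply _ _ _

lemma RootSystemData.inner_rho {a : V} (ha : a ∈ R.Pi) : ⟪R.rho, a⟫ = ⟪a, a⟫ / 2 := by
  have h := R.simpleBasis_s3.constr_basis ℝ (fun a : R.Pi => ⟪(a : V), a⟫ / 2) ⟨a, ha⟩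
  simpa [RootSystemData.rho, R.simpleBasis_apply] using h

/-- The affine Weyl vector: `(ρ̂, β) = (β, β) / 2` for every affine simple root `β`. -/
def rhoHat : AffSpace V :=
  (R.rho, 0, ⟪θ, θ⟫ / 2 + ⟪R.rho, θ⟫)

variable {R θ}

lemma affForm_rhoHat {b : AffSpace V} (hb : b ∈ affSimpleRoots R θ) :
    affForm (rhoHat R θ) b = affForm b b / 2 := by
  rcases hb with ⟨a, ha, rfl⟩ | rfl
  · simp [rhoHat, affForm, affIota, R.inner_rho ha]
  · simp [rhoHat, affForm, affIota, affDelta]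

lemma affReflect_rhoHat {b : AffSpace V} (hb : b ∈ affSimpleRoots R θ)
    (hbb : affForm b b ≠ 0) : affReflect b (rhoHat R θ) = rhoHat R θ - b := by
  rw [affReflect_apply, affForm_rhoHat hb, mul_div_cancel₀ _ two_ne_zero, div_self hbb,
    one_smul]

lemma affForm_rhoHat_pos (hθ : R.IsHighestRoot θ) {x : AffSpace V}
    (hx : x ∈ affPosRoots R) : 0 < affForm (rhoHat R θ) x := by
  obtain ⟨c, hc⟩ := exists_nat_comb_of_mem_affPosRoots hθ hx
  have hbb : ∀ b ∈ affSimpleFinset R θ, 0 < affForm b b / 2 := fun b hb =>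
    half_pos (affForm_self_pos_of_mem_affSimpleRoots hθ.mem_Δ (coe_affSimpleFinset R θ ▸ hb))
  have hterm : ∀ b ∈ affSimpleFinset R θ, 0 ≤ (c b : ℝ) * (affForm b b / 2) := fun b hb =>
    mul_nonneg (Nat.cast_nonneg _) (hbb b hb).le
  have hform :
      affForm (rhoHat R θ) x = ∑ b ∈ affSimpleFinset R θ, (c b : ℝ) * (affForm b b / 2) := by
    rw [hc, affForm_sum_right]
    refine Finset.sum_congr rfl fun b hb => ?_
    rw [affForm_smul_right, affForm_rhoHat (coe_affSimpleFinset R θ ▸ hb)]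
  refine hform ▸ (Finset.sum_nonneg hterm).lt_of_ne fun h => zero_notMem_affPosRoots R ?_
  suffices x = 0 from this ▸ hx
  rw [hc]
  refine Finset.sum_eq_zero fun b hb => ?_
  have hcb := (Finset.sum_eq_zero_iff_of_nonneg hterm).1 h.symm b hb
  rw [(mul_eq_zero.1 hcb).resolve_right (hbb b hb).ne', zero_smul]

end Rho

section WeylGroup

variable {R : RootSystemData V} {θ : V}

lemma affForm_map_of_mem_affWeylGroup {w : AffSpace V ≃ₗ[ℝ] AffSpace V}
    (hw : w ∈ affWeylGroup R θ) (x y : AffSpace V) : affForm (w x) (w y) = affForm x y := by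
  induction hw using Subgroup.closure_induction'' generalizing x y with
  | mem g hg =>
    obtain ⟨b, -, rfl⟩ := hg
    exact affForm_affReflect b x y
  | inv_mem g hg =>
    obtain ⟨b, -, rfl⟩ := hg
    rw [affReflect_inv]
    exact affForm_affReflect b x y
  | one => rfl
  | mul u v _ _ hu hv => exact (hu _ _).trans (hv x y)

lemma map_mem_affRoots_of_mem_affWeylGroup (hθ : θ ∈ R.Δ)
    {w : AffSpace V ≃ₗ[ℝ] AffSpace V} (hw : w ∈ affWeylGroup R θ) {x : AffSpace V}
    (hx : x ∈ affRoots R) : w x ∈ affRoots R := by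
  induction hw using Subgroup.closure_induction'' generalizing x with
  | mem g hg =>
    obtain ⟨b, hb, rfl⟩ := hg
    exact affReflect_mem_affRoots hx (affSimpleRoots_subset_affRoots hθ hb)
  | inv_mem g hg =>
    obtain ⟨b, hb, rfl⟩ := hg
    rw [affReflect_inv]
    exact affReflect_mem_affRoots hx (affSimpleRoots_subset_affRoots hθ hb)
  | one => exact hx
  | mul u v _ _ hu hv => exact hu (hv hx)

lemma affInversionSet_affReflect_mul (hθ : R.IsHighestRoot θ) {b : AffSpace V}
    (hb : b ∈ affSimpleRoots R θ) {w : AffSpace V ≃ₗ[ℝ] AffSpace V}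
    (hpos : w⁻¹ b ∈ affPosRoots R) :
    affInversionSet R (affReflect b * w) = insert (w⁻¹ b) (affInversionSet R w) := by
  have hbpos := affSimpleRoots_subset_affPosRoots hθ.mem_Δ hb
  have hbb := (affForm_self_pos_of_mem_affSimpleRoots hθ.mem_Δ hb).ne'
  ext μ
  simp only [affInversionSet, Set.mem_insert_iff, Set.mem_ofPred_eq, LinearEquiv.mul_apply]
  constructor
  · rintro ⟨hμ, hneg⟩
    rw [← map_neg] at hneg
    by_cases hμb : w μ = b
    · exact .inl (by simp [← hμb])
    · refine .inr ⟨hμ, ?_⟩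
      have hne : affReflect b (-(w μ)) ≠ b := fun h => hμb <| by
        rw [← neg_neg (w μ), ← affReflect_affReflect b (-(w μ)), h, affReflect_self hbb, neg_neg]
      simpa [affReflect_affReflect] using affReflect_mem_affPosRoots hθ hb hneg hne
  · rintro (rfl | ⟨hμ, hneg⟩)
    · simpa [affReflect_self hbb] using ⟨hpos, hbpos⟩
    · refine ⟨hμ, map_neg (affReflect b) (w μ) ▸ affReflect_mem_affPosRoots hθ hb hneg fun h => ?_⟩
      refine neg_notMem_affPosRoots R hpos ?_
      simpa [← h] using hμ

lemma affInversionSum_affReflect_mul (hθ : R.IsHighestRoot θ) {b : AffSpace V}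
    (hb : b ∈ affSimpleRoots R θ) {w : AffSpace V ≃ₗ[ℝ] AffSpace V}
    (hw : w ∈ affWeylGroup R θ) (hfin : (affInversionSet R w).Finite) :
    (affInversionSet R (affReflect b * w)).Finite ∧
      affInversionSum R (affReflect b * w) = affInversionSum R w + w⁻¹ b := by
  have hbb := (affForm_self_pos_of_mem_affSimpleRoots hθ.mem_Δ hb).ne'
  have hnot : ∀ {u : AffSpace V ≃ₗ[ℝ] AffSpace V}, u⁻¹ b ∉ affInversionSet R u := fun h =>
    neg_notMem_affPosRoots R (affSimpleRoots_subset_affPosRoots hθ.mem_Δ hb) (by simpa using h.2)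
  rcases mem_affPosRoots_or_neg_mem R (map_mem_affRoots_of_mem_affWeylGroup hθ.mem_Δ (inv_mem hw)
    (affSimpleRoots_subset_affRoots hθ.mem_Δ hb)) with hpos | hneg
  · have hset := affInversionSet_affReflect_mul hθ hb hpos
    refine ⟨hset ▸ hfin.insert _, ?_⟩
    rw [affInversionSum, hset, finsum_mem_insert _ hnot hfin, add_comm]
    rfl
  · -- The first case applies to `s_b * w`, which sends `-w⁻¹ b` to `b`.
    set w' := affReflect b * w
    have hw'b : w'⁻¹ b = -(w⁻¹ b) := by
      simp [w', mul_inv_rev, affReflect_inv, affReflect_self hbb]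
    have hset := affInversionSet_affReflect_mul hθ hb (hw'b ▸ hneg)
    rw [← mul_assoc, affReflect_mul_self, one_mul] at hset
    have hfin' : (affInversionSet R w').Finite := hfin.subset (hset ▸ Set.subset_insert _ _)
    have hsum : affInversionSum R w = w'⁻¹ b + affInversionSum R w' := by
      rw [affInversionSum, hset, finsum_mem_insert _ hnot hfin']
      rfl
    exact ⟨hfin', by rw [hsum, hw'b]; abel⟩

theorem affInversionSet_finite_and_affInversionSum_eq (hθ : R.IsHighestRoot θ)
    {w : AffSpace V ≃ₗ[ℝ] AffSpace V} (hw : w ∈ affWeylGroup R θ) :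
    (affInversionSet R w).Finite ∧ affInversionSum R w = rhoHat R θ - w⁻¹ (rhoHat R θ) := by
  have step : ∀ b ∈ affSimpleRoots R θ, ∀ w ∈ affWeylGroup R θ,
      (affInversionSet R w).Finite ∧ affInversionSum R w = rhoHat R θ - w⁻¹ (rhoHat R θ) →
      (affInversionSet R (affReflect b * w)).Finite ∧
        affInversionSum R (affReflect b * w) =
          rhoHat R θ - (affReflect b * w)⁻¹ (rhoHat R θ) := by
    intro b hb w hw ⟨hfin, hsum⟩
    obtain ⟨hfin', hsum'⟩ := affInversionSum_affReflect_mul hθ hb hw hfin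
    refine ⟨hfin', ?_⟩
    rw [hsum', hsum, mul_inv_rev, affReflect_inv, LinearEquiv.mul_apply,
      affReflect_rhoHat hb (affForm_self_pos_of_mem_affSimpleRoots hθ.mem_Δ hb).ne',
      map_sub]
    abel
  induction hw using Subgroup.closure_induction_left with
  | one =>
    have hempty : affInversionSet R 1 = ∅ :=
      Set.eq_empty_of_forall_notMem fun x hx => neg_notMem_affPosRoots R hx.1 hx.2
    simp [affInversionSum, hempty]
  | mul_left g hg w hw ih =>
    obtain ⟨b, hb, rfl⟩ := hg
    exact step b hb w hw ih
  | inv_mul_cancel g hg w hw ih =>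
    obtain ⟨b, hb, rfl⟩ := hg
    rw [affReflect_inv]
    exact step b hb w hw ih

lemma affForm_affInversionSum_affIota (hθ : R.IsHighestRoot θ)
    {w : AffSpace V ≃ₗ[ℝ] AffSpace V} (hw : w ∈ affWeylGroup R θ) {α : V} (hα : α ∈ R.Pi) :
    affForm (affInversionSum R w) (affIota α) =
      ⟪α, α⟫ / 2 - affForm (rhoHat R θ) (w (affIota α)) := by
  rw [(affInversionSet_finite_and_affInversionSum_eq hθ hw).2, affForm_sub_left,
    affForm_rhoHat (.inl ⟨α, hα, rfl⟩), affForm_affIota,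
    ← affForm_map_of_mem_affWeylGroup hw (w⁻¹ _)]
  simp

lemma exists_int_two_mul_affForm_affInversionSum (w : AffSpace V ≃ₗ[ℝ] AffSpace V)
    {α : V} (hα : α ∈ R.Pi) :
    ∃ n : ℤ, 2 * affForm (affInversionSum R w) (affIota α) = n * ⟪α, α⟫ := by
  have hαR : affIota α ∈ affRoots R := ⟨α, R.mem_Δ_of_mem_Pi hα, 0, by simp [affIota]⟩
  refine finsum_mem_induction (fun x => ∃ n : ℤ, 2 * affForm x (affIota α) = n * ⟪α, α⟫)
    ⟨0, by simp [affForm]⟩ ?_ fun x hx => ?_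
  · rintro x y ⟨m, hm⟩ ⟨n, hn⟩
    exact ⟨m + n, by rw [affForm_add_left]; push_cast; linarith⟩
  · simpa [affForm_affIota] using
      exists_int_two_mul_affForm (affPosRoots_subset_affRoots R hx.1) hαR

lemma exists_int_two_mul_affForm_rhoHat (hθ : R.IsHighestRoot θ)
    {u : AffSpace V ≃ₗ[ℝ] AffSpace V} (hu : u ∈ affWeylGroup R θ) {α : V} (hα : α ∈ R.Pi)
    (hpos : u (affIota α) ∈ affPosRoots R) :
    ∃ n : ℤ, 1 ≤ n ∧ 2 * affForm (rhoHat R θ) (u (affIota α)) = n * ⟪α, α⟫ := by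
  obtain ⟨m, hm⟩ := exists_int_two_mul_affForm_affInversionSum u hα
  rw [affForm_affInversionSum_affIota hθ hu hα] at hm
  have hρ := affForm_rhoHat_pos hθ hpos
  have hαα := R.inner_self_pos (R.mem_Δ_of_mem_Pi hα)
  have hm' : (0 : ℝ) < 1 - m := pos_of_mul_pos_left (by linarith) hαα.le
  exact ⟨1 - m, by exact_mod_cast hm', by push_cast; linarith⟩

lemma mem_affSimpleRoots_of_two_mul_affForm_rhoHat_eq (hθ : R.IsHighestRoot θ)
    {u : AffSpace V ≃ₗ[ℝ] AffSpace V} (hu : u ∈ affWeylGroup R θ) {α : V} (hα : α ∈ R.Pi)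
    (hpos : u (affIota α) ∈ affPosRoots R)
    (h : 2 * affForm (rhoHat R θ) (u (affIota α)) = ⟪α, α⟫) :
    u (affIota α) ∈ affSimpleRoots R θ := by
  by_contra hns
  obtain ⟨b, hb, hβb⟩ := exists_affForm_pos_of_mem_affPosRoots hθ hpos
  have hbb := affForm_self_pos_of_mem_affSimpleRoots hθ.mem_Δ hb
  -- `s_b u` sends `α` to the positive root `s_b (u α)`, whose `ρ̂`-pairing is below `(α, α) / 2`.
  have hpos' : (affReflect b * u) (affIota α) ∈ affPosRoots R := by
    rw [LinearEquiv.mul_apply]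
    exact affReflect_mem_affPosRoots hθ hb hpos fun h => hns (h ▸ hb)
  obtain ⟨n, hn, hρ⟩ := exists_int_two_mul_affForm_rhoHat hθ
    (mul_mem (Subgroup.subset_closure ⟨b, hb, rfl⟩) hu) hα hpos'
  rw [LinearEquiv.mul_apply, affReflect_apply, affForm_sub_right, affForm_smul_right,
    affForm_rhoHat hb] at hρ
  have hcancel : 2 * affForm (u (affIota α)) b / affForm b b * (affForm b b / 2) =
      affForm (u (affIota α)) b := by
    field_simp
  have hαα := R.inner_self_pos (R.mem_Δ_of_mem_Pi hα)
  have hle : ⟪α, α⟫ ≤ n * ⟪α, α⟫ := le_mul_of_one_le_left hαα.le (by exact_mod_cast hn)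
  linarith

end WeylGroup

/-- Lemma 2.5.  Let `w ∈ Ŵ` be a dominant element of the affine
Weyl group.  Then for every simple root `α ∈ Π`:
(i) `(|N(w)|, α) ≤ 0`;
(ii) `(|N(w)|, α) = 0` if and only if `w(α)` is an affine simple root. -/
theorem inversionSum_nonpos_and_zero_iff_simple
    {V : Type*} [NormedAddCommGroup V] [InnerProductSpace ℝ V] [FiniteDimensional ℝ V]
    (R : RootSystemData V) (θ : V) (hθ : R.IsHighestRoot θ)
    (w : AffSpace V ≃ₗ[ℝ] AffSpace V) (hw : w ∈ affWeylGroup R θ)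
    (hdom : IsDominant R w) (α : V) (hα : α ∈ R.Pi) :
    affForm (affInversionSum R w) (affIota α) ≤ 0 ∧
    (affForm (affInversionSum R w) (affIota α) = 0 ↔
      w (affIota α) ∈ affSimpleRoots R θ) := by
  have hpos := hdom α hα
  obtain ⟨n, hn, hρ⟩ := exists_int_two_mul_affForm_rhoHat hθ hw hα hpos
  have hform := affForm_affInversionSum_affIota hθ hw hα
  have hval : affForm (affInversionSum R w) (affIota α) = (1 - n) * (⟪α, α⟫ / 2) := by
    linarith
  have hαα := R.inner_self_pos (R.mem_Δ_of_mem_Pi hα)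
  have hn' : (1 : ℝ) ≤ n := by exact_mod_cast hn
  refine ⟨hval ▸ mul_nonpos_of_nonpos_of_nonneg (by linarith) (by positivity), fun h0 => ?_,
    fun hs => ?_⟩
  · refine mem_affSimpleRoots_of_two_mul_affForm_rhoHat_eq hθ hw hα hpos ?_
    have hn1 : 1 - (n : ℝ) = 0 := (mul_eq_zero.1 (hval ▸ h0)).resolve_right (by positivity)
    rw [hρ, show (n : ℝ) = 1 by linarith, one_mul]
  · rw [hform, affForm_rhoHat hs, affForm_map_of_mem_affWeylGroup hw, affForm_affIota, sub_self]

end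
end

section
/- For g = sl_{n+1}(ℂ): (1) if c is an ad-nilpotent ideal with generator set Γ(c) = {(i₁,j₁),…,(i_k,j_k)}, then n_g(c) = p({i₁,…,i_k} ∪ {j₁−1,…,j_k−1}); (2) for a subset E ⊆ [n], the ideals c with n_g(c) = p(E) are in bijection with pairs of integer sequences 1 ≤ a₁ < … < a_k ≤ n, 1 ≤ b₁ < … < b_k ≤ n (k not fixed) such that a_i ≤ b_i for all i and {a₁,…,a_k} ∪ {b₁,…,b_k} = E, the ideal corresponding to such a pair having generators {(a_i, b_i+1) : 1 ≤ i ≤ k}; (3) if #E = s, then the number of ad-nilpotent ideals c with n_g(c) = p(E) equals M_s, the s-th Motzkin number; in particular it depends only on s = n − srk p(E). -/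
open scoped Classical

noncomputable section

namespace SLModel

/-!
Combinatorial model for `g = sl_{n+1}(ℂ)` with the upper-triangular Borel `b` and
diagonal Cartan `t`: positive roots are identified with pairs `(i,j)`,
`1 ≤ i < j ≤ n+1`, with simple roots `α_i = (i, i+1)` and
`(i,j) = α_i + ⋯ + α_{j-1}`.  Ad-nilpotent ideals of `b` (ideals of `b` contained
in `u = [b,b]`) correspond bijectively to upper ideals of this root poset, where
`(i,j) ≼ (i',j')` iff `i' ≤ i` and `j ≤ j'`.
-/

/-- `(i,j)` is a positive root of `sl_{n+1}`. -/
def IsPosRoot (n : ℕ) (p : ℕ × ℕ) : Prop := 1 ≤ p.1 ∧ p.1 < p.2 ∧ p.2 ≤ n + 1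

/-- `I` is an upper ideal of the root poset of `sl_{n+1}`, i.e. the root set of an
ad-nilpotent ideal `c` of `b`. -/
def IsUpperIdeal (n : ℕ) (I : Finset (ℕ × ℕ)) : Prop :=
  (∀ p ∈ I, IsPosRoot n p) ∧
  ∀ p ∈ I, ∀ q : ℕ × ℕ, IsPosRoot n q → q.1 ≤ p.1 → p.2 ≤ q.2 → q ∈ I

/-- The condition `g_{-α_l} ⊆ n_g(c)` for the ad-nilpotent ideal `c` with root set
`I`.  Since `[g_{-α_l}, g_{(i,j)}] = g_{(i,j) - α_l}` when `(i,j) - α_l` is a root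
(namely `(i+1,j)` if `l = i < j - 1`, and `(i,j-1)` if `l = j-1 > i`),
`[g_{-α_l}, g_{α_l}] ⊆ t`, and `0` otherwise, the root space `g_{-α_l}` normalizes
`c` iff `(l,l+1) ∉ I` and `I` is closed under subtracting `α_l`. -/
def NegSimpleInNormalizer (I : Finset (ℕ × ℕ)) (l : ℕ) : Prop :=
  (l, l + 1) ∉ I ∧
  (∀ p ∈ I, p.1 = l → l + 1 < p.2 → (l + 1, p.2) ∈ I) ∧
  (∀ p ∈ I, p.2 = l + 1 → p.1 < l → (p.1, l) ∈ I)

/-- `n_g(c) = p(E)`, where for `E ⊆ [n]` the standard parabolic `p(E)` is the one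
whose standard Levi omits exactly the simple roots `α_l`, `l ∈ E`; thus
`g_{-α_l} ⊆ p(E)` iff `l ∉ E`. -/
def NormalizerEq (n : ℕ) (I : Finset (ℕ × ℕ)) (E : Finset ℕ) : Prop :=
  ∀ l, 1 ≤ l → l ≤ n → (NegSimpleInNormalizer I l ↔ l ∉ E)

/-- `n_g(c) = b`, i.e. no negative simple root space normalizes `c`. -/
def NormalizerIsBorel (n : ℕ) (I : Finset (ℕ × ℕ)) : Prop :=
  ∀ l, 1 ≤ l → l ≤ n → ¬ NegSimpleInNormalizer I l

/-- `c` is strictly positive: `c ⊆ [u,u]`, i.e. `I` contains no simple root. -/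
def IsStrictlyPositive (I : Finset (ℕ × ℕ)) : Prop := ∀ l : ℕ, (l, l + 1) ∉ I

/-- `p` is a generator of the ideal with root set `I`: a minimal element of `I`. -/
def IsGenerator (I : Finset (ℕ × ℕ)) (p : ℕ × ℕ) : Prop :=
  p ∈ I ∧ ∀ q ∈ I, p.1 ≤ q.1 → q.2 ≤ p.2 → q = p

/-- The `s`-th Motzkin number `M_s = Σ_r binom(s, 2r) C_r`. -/
def motzkin (s : ℕ) : ℕ := ∑ r ∈ Finset.range (s + 1), s.choose (2 * r) * catalan r

/-- The upper ideal generated by a finite set `G` of positive roots (all pairs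
`(x,y)` lying above some element of `G`). -/
def upperClosure' (n : ℕ) (G : Finset (ℕ × ℕ)) : Finset (ℕ × ℕ) :=
  ((Finset.Icc 1 (n + 1)) ×ˢ (Finset.Icc 1 (n + 1))).filter
    fun p => p.1 < p.2 ∧ ∃ q ∈ G, p.1 ≤ q.1 ∧ q.2 ≤ p.2

/-- A pair of integer sequences `1 ≤ a₁ < ⋯ < a_k ≤ n`, `1 ≤ b₁ < ⋯ < b_k ≤ n`
with `a_i ≤ b_i` and `{a₁,…,a_k} ∪ {b₁,…,b_k} = E` (the length `k` is not fixed). -/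
def GoodPair (n : ℕ) (E : Finset ℕ)
    (s : (k : ℕ) × ((Fin k → ℕ) × (Fin k → ℕ))) : Prop :=
  StrictMono s.2.1 ∧ StrictMono s.2.2 ∧
  (∀ i, 1 ≤ s.2.1 i ∧ s.2.1 i ≤ n) ∧ (∀ i, 1 ≤ s.2.2 i ∧ s.2.2 i ≤ n) ∧
  (∀ i, s.2.1 i ≤ s.2.2 i) ∧
  Finset.image s.2.1 Finset.univ ∪ Finset.image s.2.2 Finset.univ = E

/-- The ideal with generators `{(a_i, b_i + 1) : 1 ≤ i ≤ k}` associated to a pair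
of sequences `(a, b)`. -/
def idealOfPair (n : ℕ) (s : (k : ℕ) × ((Fin k → ℕ) × (Fin k → ℕ))) :
    Finset (ℕ × ℕ) :=
  upperClosure' n (Finset.image (fun i => (s.2.1 i, s.2.2 i + 1)) Finset.univ)

/-!
A root space `g_{-α_l}` fails to normalize `c` exactly when some generator `(i, j)` of `c`
has `i = l` or `j - 1 = l`: such a generator is either `α_l` itself or `(i, j) - α_l` is a
root of `c` strictly below it, while if no generator touches `l`, every root of `c` minus
`α_l` stays above a generator. The generators form an antichain, so listed by increasing
first coordinate they also have increasing second coordinates; this is the bijection with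
pairs of sequences. Such a pair is determined by its sets of terms `A`, `B` with
`A ∪ B = E` and `#A = #B`, and `a_i ≤ b_i` says that every initial segment of `E` contains
at least as many elements of `A` as of `B`. Reading `E` in increasing order, with elements of
`A \ B` as up-steps, of `B \ A` as down-steps and of `A ∩ B` as flat steps, these pairs become
Motzkin paths of length `#E`: choosing the `2r` non-flat positions and a Dyck path on them
gives `binom(#E, 2r) C_r`.
-/

open Finset

lemma StrictMono.eq_of_image_univ_eq {α : Type*} [LinearOrder α] {k : ℕ} {a a' : Fin k → α}
    (ha : StrictMono a) (ha' : StrictMono a') (h : univ.image a = univ.image a') : a = a' := by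
  have hcard : #(univ.image a) = k := by simp [card_image_of_injective _ ha.injective]
  rw [orderEmbOfFin_unique hcard (by simp) ha,
    orderEmbOfFin_unique hcard (fun i => h ▸ mem_image_of_mem _ (mem_univ i)) ha']

section RootPoset

variable {n : ℕ} {I G : Finset (ℕ × ℕ)}

lemma mem_upperClosure' {p : ℕ × ℕ} :
    p ∈ upperClosure' n G ↔ IsPosRoot n p ∧ ∃ q ∈ G, p.1 ≤ q.1 ∧ q.2 ≤ p.2 := by
  simp only [upperClosure', mem_filter, mem_product, mem_Icc, IsPosRoot]
  constructor
  · rintro ⟨⟨⟨h1, -⟩, -, h4⟩, h5, h6⟩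
    exact ⟨⟨h1, h5, h4⟩, h6⟩
  · rintro ⟨⟨h1, h2, h3⟩, h4⟩
    exact ⟨⟨⟨h1, by omega⟩, by omega, h3⟩, h2, h4⟩

lemma isUpperIdeal_upperClosure' (n : ℕ) (G : Finset (ℕ × ℕ)) :
    IsUpperIdeal n (upperClosure' n G) := by
  refine ⟨fun p hp => (mem_upperClosure'.1 hp).1, fun p hp q hq h1 h2 => ?_⟩
  obtain ⟨-, g, hg, hg1, hg2⟩ := mem_upperClosure'.1 hp
  exact mem_upperClosure'.2 ⟨hq, g, hg, h1.trans hg1, hg2.trans h2⟩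

lemma IsGenerator.eq_of_fst_eq {g g' : ℕ × ℕ} (hg : IsGenerator I g) (hg' : IsGenerator I g')
    (h : g.1 = g'.1) : g = g' := by
  rcases le_total g.2 g'.2 with hle | hle
  · exact hg'.2 g hg.1 h.ge hle
  · exact (hg.2 g' hg'.1 h.le hle).symm

lemma IsGenerator.snd_lt_snd {g g' : ℕ × ℕ} (hg : IsGenerator I g) (hg' : IsGenerator I g')
    (h : g.1 < g'.1) : g.2 < g'.2 := by
  by_contra! hle
  exact h.ne (congrArg Prod.fst (hg.2 g' hg'.1 h.le hle)).symm

namespace IsUpperIdeal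

variable (hI : IsUpperIdeal n I)
include hI

/-- A root of `I` closest to the diagonal among those below `p` is a generator. -/
lemma exists_isGenerator {p : ℕ × ℕ} (hp : p ∈ I) :
    ∃ g, IsGenerator I g ∧ p.1 ≤ g.1 ∧ g.2 ≤ p.2 := by
  set S := I.filter fun q => p.1 ≤ q.1 ∧ q.2 ≤ p.2
  obtain ⟨g, hgS, hmin⟩ := S.exists_min_image (fun q => q.2 - q.1) ⟨p, by simp [S, hp]⟩
  simp only [S, mem_filter] at hgS hmin
  refine ⟨g, ⟨hgS.1, fun q hq h1 h2 => ?_⟩, hgS.2⟩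
  have := hmin q ⟨hq, hgS.2.1.trans h1, h2.trans hgS.2.2⟩
  have := (hI.1 q hq).2.1
  exact Prod.ext (by omega) (by omega)

lemma upperClosure'_eq (hG : ∀ p, p ∈ G ↔ IsGenerator I p) : upperClosure' n G = I := by
  ext p
  rw [mem_upperClosure']
  constructor
  · rintro ⟨hp, q, hq, h1, h2⟩
    exact hI.2 q ((hG q).1 hq).1 p hp h1 h2
  · intro hp
    obtain ⟨g, hg, h1, h2⟩ := hI.exists_isGenerator hp
    exact ⟨hI.1 p hp, g, (hG g).2 hg, h1, h2⟩

/-- A generator `(l, j)` is either `α_l` itself, or `(l + 1, j) = (l, j) - α_l` lies in `I`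
strictly below it. -/
lemma not_negSimpleInNormalizer_fst {g : ℕ × ℕ} (hg : IsGenerator I g) :
    ¬ NegSimpleInNormalizer I g.1 := by
  rintro ⟨hsimple, hleft, -⟩
  obtain ⟨-, hlt, -⟩ := hI.1 g hg.1
  rcases (show g.1 + 1 ≤ g.2 from hlt).eq_or_lt with h | h
  · exact hsimple (by rw [h]; exact hg.1)
  · have := hg.2 _ (hleft g hg.1 rfl h) (Nat.le_succ _) le_rfl
    simp [Prod.ext_iff] at this

lemma not_negSimpleInNormalizer_snd {g : ℕ × ℕ} (hg : IsGenerator I g) :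
    ¬ NegSimpleInNormalizer I (g.2 - 1) := by
  rintro ⟨hsimple, -, hright⟩
  obtain ⟨-, hlt, -⟩ := hI.1 g hg.1
  have hg2 : g.2 - 1 + 1 = g.2 := by omega
  rcases (Nat.le_sub_one_of_lt hlt).eq_or_lt with h | h
  · exact hsimple (by rw [hg2, ← h]; exact hg.1)
  · have := hg.2 _ (hright g hg.1 hg2.symm h) le_rfl (Nat.sub_le _ _)
    simp [Prod.ext_iff] at this
    omega

lemma negSimpleInNormalizer {l : ℕ} (hfst : ∀ g, IsGenerator I g → g.1 ≠ l)
    (hsnd : ∀ g, IsGenerator I g → g.2 ≠ l + 1) : NegSimpleInNormalizer I l := by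
  refine ⟨fun hl => hfst (l, l + 1) ⟨hl, fun q hq h1 h2 => ?_⟩ rfl, fun p hp hp1 hp2 => ?_,
    fun p hp hp2 hp1 => ?_⟩
  · have := (hI.1 q hq).2.1
    exact Prod.ext (by simp at *; omega) (by simp at *; omega)
  · obtain ⟨g, hg, hg1, hg2⟩ := hI.exists_isGenerator hp
    have := hfst g hg
    exact hI.2 g hg.1 _ ⟨by omega, hp2, (hI.1 p hp).2.2⟩ (by simp; omega) hg2
  · obtain ⟨g, hg, hg1, hg2⟩ := hI.exists_isGenerator hp
    have := hsnd g hg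
    obtain ⟨hp1', -, hpn⟩ := hI.1 p hp
    exact hI.2 g hg.1 _ ⟨hp1', hp1, by omega⟩ hg1 (by simp; omega)

theorem normalizerEq_generators (hG : ∀ p, p ∈ G ↔ IsGenerator I p) :
    NormalizerEq n I ((G.image Prod.fst) ∪ (G.image fun p => p.2 - 1)) := by
  intro l _ _
  simp only [mem_union, mem_image, hG, not_or, not_exists, not_and]
  constructor
  · intro hl
    exact ⟨fun g hg h => hI.not_negSimpleInNormalizer_fst hg (h ▸ hl),
      fun g hg h => hI.not_negSimpleInNormalizer_snd hg (h ▸ hl)⟩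
  · rintro ⟨hfst, hsnd⟩
    refine hI.negSimpleInNormalizer (fun g hg h => hfst g hg h) (fun g hg h => hsnd g hg ?_)
    omega

end IsUpperIdeal

lemma NormalizerEq.unique {E E' : Finset ℕ} (hE : E ⊆ Icc 1 n) (hE' : E' ⊆ Icc 1 n)
    (h : NormalizerEq n I E) (h' : NormalizerEq n I E') : E = E' := by
  ext l
  by_cases hl : 1 ≤ l ∧ l ≤ n
  · rw [← not_iff_not, ← h l hl.1 hl.2, h' l hl.1 hl.2]
  · exact iff_of_false (fun h => hl (mem_Icc.1 (hE h))) (fun h => hl (mem_Icc.1 (hE' h)))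

end RootPoset

section Sequences

variable {n : ℕ} {E : Finset ℕ} {s : (k : ℕ) × ((Fin k → ℕ) × (Fin k → ℕ))}

def generatorsOfPair (s : (k : ℕ) × ((Fin k → ℕ) × (Fin k → ℕ))) :
    Finset (ℕ × ℕ) :=
  univ.image fun i => (s.2.1 i, s.2.2 i + 1)

def termSets (s : (k : ℕ) × ((Fin k → ℕ) × (Fin k → ℕ))) : Finset ℕ × Finset ℕ :=
  (univ.image s.2.1, univ.image s.2.2)

lemma goodPair_iff : GoodPair n E s ↔ StrictMono s.2.1 ∧ StrictMono s.2.2 ∧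
    (∀ i, IsPosRoot n (s.2.1 i, s.2.2 i + 1)) ∧ univ.image s.2.1 ∪ univ.image s.2.2 = E := by
  simp only [GoodPair, IsPosRoot]
  constructor
  · rintro ⟨ha, hb, h1, h2, h3, hE⟩
    exact ⟨ha, hb, fun i => by have := h1 i; have := h2 i; have := h3 i; omega, hE⟩
  · rintro ⟨ha, hb, h, hE⟩
    exact ⟨ha, hb, fun i => by have := h i; omega, fun i => by have := h i; omega,
      fun i => by have := h i; omega, hE⟩

lemma image_fst_generatorsOfPair : (generatorsOfPair s).image Prod.fst = univ.image s.2.1 := by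
  simp only [generatorsOfPair, image_image]
  rfl

lemma image_snd_generatorsOfPair :
    (generatorsOfPair s).image (fun p => p.2 - 1) = univ.image s.2.2 := by
  simp [generatorsOfPair, image_image, Function.comp_def]

lemma isGenerator_idealOfPair_iff (ha : StrictMono s.2.1) (hb : StrictMono s.2.2)
    (hroot : ∀ i, IsPosRoot n (s.2.1 i, s.2.2 i + 1)) {p : ℕ × ℕ} :
    IsGenerator (idealOfPair n s) p ↔ p ∈ generatorsOfPair s := by
  have hmem : ∀ i, (s.2.1 i, s.2.2 i + 1) ∈ idealOfPair n s := fun i =>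
    mem_upperClosure'.2 ⟨hroot i, _, mem_image_of_mem _ (mem_univ i), le_rfl, le_rfl⟩
  constructor
  · rintro ⟨hp, hmin⟩
    obtain ⟨-, q, hq, h1, h2⟩ := mem_upperClosure'.1 hp
    obtain ⟨i, -, rfl⟩ := mem_image.1 hq
    rw [← hmin _ (hmem i) h1 h2]
    exact hq
  · rintro hp
    obtain ⟨i, -, rfl⟩ := mem_image.1 hp
    refine ⟨hmem i, fun q hq h1 h2 => ?_⟩
    obtain ⟨-, g, hg, hg1, hg2⟩ := mem_upperClosure'.1 hq
    obtain ⟨j, -, rfl⟩ := mem_image.1 hg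
    have hij : i ≤ j := ha.le_iff_le.1 (h1.trans hg1)
    have hji : j ≤ i := hb.le_iff_le.1 (by simp at h2 hg2; omega)
    obtain rfl := le_antisymm hij hji
    exact Prod.ext (le_antisymm hg1 h1) (le_antisymm h2 hg2)

lemma termSets_injOn : Set.InjOn termSets {s | StrictMono s.2.1 ∧ StrictMono s.2.2} := by
  rintro ⟨k, a, b⟩ ⟨ha, hb⟩ ⟨k', a', b'⟩ ⟨ha', hb'⟩ h
  simp only [termSets, Prod.ext_iff] at h
  obtain rfl : k = k' := by
    simpa [card_image_of_injective _ ha.injective, card_image_of_injective _ ha'.injective]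
      using congrArg card h.1
  obtain rfl : a = a' := StrictMono.eq_of_image_univ_eq ha ha' h.1
  obtain rfl : b = b' := StrictMono.eq_of_image_univ_eq hb hb' h.2
  rfl

lemma IsUpperIdeal.exists_generatorsOfPair_eq {I G : Finset (ℕ × ℕ)} (hI : IsUpperIdeal n I)
    (hG : ∀ p, p ∈ G ↔ IsGenerator I p) :
    ∃ s : (k : ℕ) × ((Fin k → ℕ) × (Fin k → ℕ)),
      StrictMono s.2.1 ∧ StrictMono s.2.2 ∧ generatorsOfPair s = G := by
  have hinj : Set.InjOn Prod.fst G := fun g hg g' hg' h =>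
    ((hG g).1 hg).eq_of_fst_eq ((hG g').1 hg') h
  have hA : #(G.image Prod.fst) = #G := card_image_of_injOn hinj
  set a := (G.image Prod.fst).orderEmbOfFin hA
  choose φ hφG hφ using fun i => mem_image.1 ((G.image Prod.fst).orderEmbOfFin_mem hA i)
  have hpair : ∀ i, (a i, (φ i).2 - 1 + 1) = φ i := fun i => by
    have := (hI.1 _ ((hG _).1 (hφG i)).1).2.1
    exact Prod.ext (hφ i).symm (by omega)
  refine ⟨⟨#G, a, fun i => (φ i).2 - 1⟩, a.strictMono, fun i j hij => ?_, ?_⟩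
  · have := ((hG _).1 (hφG i)).snd_lt_snd ((hG _).1 (hφG j))
      (by rw [hφ, hφ]; exact a.strictMono hij)
    have := (hI.1 _ ((hG _).1 (hφG i)).1).2.1
    dsimp only
    omega
  · ext g
    simp only [generatorsOfPair, mem_image, mem_univ, true_and, hpair]
    refine ⟨by rintro ⟨i, rfl⟩; exact hφG i, fun hg => ?_⟩
    obtain ⟨i, hi⟩ : g.1 ∈ Set.range a := by simpa [a] using mem_image_of_mem Prod.fst hg
    exact ⟨i, hinj (hφG i) hg ((hφ i).trans hi)⟩

lemma mapsTo_idealOfPair (hs : GoodPair n E s) :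
    IsUpperIdeal n (idealOfPair n s) ∧ NormalizerEq n (idealOfPair n s) E := by
  obtain ⟨ha, hb, hroot, hE⟩ := goodPair_iff.1 hs
  have hI := isUpperIdeal_upperClosure' n (generatorsOfPair s)
  have := hI.normalizerEq_generators fun p => (isGenerator_idealOfPair_iff ha hb hroot).symm
  rw [image_fst_generatorsOfPair, image_snd_generatorsOfPair, hE] at this
  exact ⟨hI, this⟩

lemma injOn_idealOfPair : Set.InjOn (idealOfPair n) {s | GoodPair n E s} := by
  intro s hs s' hs' h
  obtain ⟨ha, hb, hroot, -⟩ := goodPair_iff.1 hs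
  obtain ⟨ha', hb', hroot', -⟩ := goodPair_iff.1 hs'
  have hG : generatorsOfPair s = generatorsOfPair s' := by
    ext p
    rw [← isGenerator_idealOfPair_iff ha hb hroot, ← isGenerator_idealOfPair_iff ha' hb' hroot',
      h]
  refine termSets_injOn ⟨ha, hb⟩ ⟨ha', hb'⟩ ?_
  simp only [termSets, ← image_fst_generatorsOfPair, ← image_snd_generatorsOfPair, hG]

lemma surjOn_idealOfPair (hE : E ⊆ Icc 1 n) :
    Set.SurjOn (idealOfPair n) {s | GoodPair n E s}
      {I : Finset (ℕ × ℕ) | IsUpperIdeal n I ∧ NormalizerEq n I E} := by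
  rintro I ⟨hI, hN⟩
  set G := I.filter (IsGenerator I)
  have hG : ∀ p, p ∈ G ↔ IsGenerator I p := fun p => by simpa [G] using fun h => h.1
  have hroot : ∀ g ∈ G, IsPosRoot n g := fun g hg => hI.1 g ((hG g).1 hg).1
  obtain ⟨s, ha, hb, hs⟩ := hI.exists_generatorsOfPair_eq hG
  have hGE : G.image Prod.fst ∪ G.image (fun p => p.2 - 1) ⊆ Icc 1 n := by
    intro l hl
    simp only [mem_union, mem_image] at hl
    rcases hl with ⟨g, hg, rfl⟩ | ⟨g, hg, rfl⟩ <;>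
    · have := hroot g hg
      simp only [IsPosRoot] at this
      simp only [mem_Icc]
      omega
  have hsroot : ∀ i, IsPosRoot n (s.2.1 i, s.2.2 i + 1) := fun i =>
    hroot _ (hs ▸ mem_image_of_mem _ (mem_univ i))
  refine ⟨s, goodPair_iff.2 ⟨ha, hb, hsroot, ?_⟩, ?_⟩
  · rw [← image_fst_generatorsOfPair, ← image_snd_generatorsOfPair, hs]
    exact (hI.normalizerEq_generators hG).unique hGE hE hN
  · change upperClosure' n (generatorsOfPair s) = I
    rw [hs, hI.upperClosure'_eq hG]

theorem bijOn_idealOfPair (hE : E ⊆ Icc 1 n) :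
    Set.BijOn (idealOfPair n) {s | GoodPair n E s}
      {I : Finset (ℕ × ℕ) | IsUpperIdeal n I ∧ NormalizerEq n I E} :=
  ⟨fun _ => mapsTo_idealOfPair, injOn_idealOfPair, surjOn_idealOfPair hE⟩

end Sequences

section Dominance

variable {α β : Type*} [LinearOrder α] [LinearOrder β]

def Dominates (A B : Finset α) : Prop := ∀ t, #(B.filter (· ≤ t)) ≤ #(A.filter (· ≤ t))

/-- The left side only changes at elements of `B`. -/
lemma dominates_iff_forall_mem {A B : Finset α} :
    Dominates A B ↔ ∀ t ∈ B, #(B.filter (· ≤ t)) ≤ #(A.filter (· ≤ t)) := by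
  refine ⟨fun h t _ => h t, fun h t => ?_⟩
  rcases (B.filter (· ≤ t)).eq_empty_or_nonempty with he | hne
  · simp [he]
  · obtain ⟨hd, hdt⟩ := mem_filter.1 ((B.filter (· ≤ t)).max'_mem hne)
    set d := (B.filter (· ≤ t)).max' hne
    have hB : B.filter (· ≤ t) = B.filter (· ≤ d) := by
      ext x
      simp only [mem_filter, and_congr_right_iff]
      exact fun hx =>
        ⟨fun hxt => le_max' _ x (mem_filter.2 ⟨hx, hxt⟩), fun hxd => hxd.trans hdt⟩
    calc #(B.filter (· ≤ t)) = #(B.filter (· ≤ d)) := by rw [hB]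
      _ ≤ #(A.filter (· ≤ d)) := h d hd
      _ ≤ #(A.filter (· ≤ t)) :=
        card_le_card (monotone_filter_right _ fun x _ hx => hx.trans hdt)

lemma dominates_map_iff (f : α ↪o β) {A B : Finset α} :
    Dominates (A.map f.toEmbedding) (B.map f.toEmbedding) ↔ Dominates A B := by
  have hcard : ∀ (C : Finset α) t,
      #((C.map f.toEmbedding).filter (· ≤ f t)) = #(C.filter (· ≤ t)) :=
    fun C t => by simp [filter_map]
  simp only [dominates_iff_forall_mem, forall_mem_map, RelEmbedding.coe_toEmbedding, hcard]

lemma dominates_sdiff_iff {A B : Finset α} : Dominates (A \ B) (B \ A) ↔ Dominates A B := by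
  have hcard : ∀ (C D : Finset α) t,
      #((C \ D).filter (· ≤ t)) + #((C ∩ D).filter (· ≤ t)) = #(C.filter (· ≤ t)) :=
    fun C D t => by
      rw [← card_union_of_disjoint (disjoint_filter_filter (disjoint_sdiff_inter C D)),
        ← filter_union, sdiff_union_inter]
  refine forall_congr' fun t => ?_
  have := hcard A B t
  have := hcard B A t
  rw [inter_comm] at this
  omega

lemma dominates_image_iff {k : ℕ} {a b : Fin k → α} (ha : StrictMono a) (hb : StrictMono b) :
    Dominates (univ.image a) (univ.image b) ↔ ∀ i, a i ≤ b i := by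
  have hcard : ∀ {c : Fin k → α}, StrictMono c → ∀ t,
      #((univ.image c).filter (· ≤ t)) = #(univ.filter (c · ≤ t)) := fun hc t => by
    rw [filter_image, card_image_of_injective _ hc.injective]
  simp only [Dominates, hcard ha, hcard hb]
  refine ⟨fun h i => ?_,
    fun h t => card_le_card (monotone_filter_right _ fun j _ hj => (h j).trans hj)⟩
  by_contra! hlt
  have hsub : univ.filter (a · ≤ b i) ⊆ Iio i := fun j hj => by
    simp only [mem_filter, mem_univ, true_and, mem_Iio] at hj ⊢
    exact ha.lt_iff_lt.1 (hj.trans_lt hlt)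
  have heq : univ.filter (b · ≤ b i) = Iic i := by
    ext j
    simp [hb.le_iff_le]
  have := (h (b i)).trans (card_le_card hsub)
  rw [heq, Fin.card_Iic, Fin.card_Iio] at this
  omega

/-- The pairs of sets of terms `({a_i}, {b_i})` of the sequences counted by `GoodPair n E`. -/
def balancedPairs (E : Finset α) : Finset (Finset α × Finset α) :=
  (E.powerset ×ˢ E.powerset).filter fun q => q.1 ∪ q.2 = E ∧ #q.1 = #q.2 ∧ Dominates q.1 q.2

lemma mem_balancedPairs {E : Finset α} {q : Finset α × Finset α} :
    q ∈ balancedPairs E ↔ q.1 ∪ q.2 = E ∧ #q.1 = #q.2 ∧ Dominates q.1 q.2 := by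
  rw [balancedPairs, mem_filter, mem_product, mem_powerset, mem_powerset, and_iff_right_iff_imp]
  rintro ⟨rfl, -⟩
  exact ⟨subset_union_left, subset_union_right⟩

end Dominance

theorem bijOn_termSets {n : ℕ} {E : Finset ℕ} (hE : E ⊆ Icc 1 n) :
    Set.BijOn termSets {s | GoodPair n E s} (balancedPairs E) := by
  refine ⟨fun s hs => ?_,
    fun s hs s' hs' => termSets_injOn ⟨hs.1, hs.2.1⟩ ⟨hs'.1, hs'.2.1⟩, fun q hq => ?_⟩
  · obtain ⟨ha, hb, -, -, hab, hE⟩ := hs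
    refine mem_balancedPairs.2 ⟨hE, ?_, (dominates_image_iff ha hb).2 hab⟩
    simp [termSets, card_image_of_injective _ ha.injective,
      card_image_of_injective _ hb.injective]
  · obtain ⟨hE', hcard, hdom⟩ := mem_balancedPairs.1 hq
    set a := q.1.orderEmbOfFin rfl
    set b := q.2.orderEmbOfFin hcard.symm
    have hmem : ∀ x ∈ q.1 ∪ q.2, 1 ≤ x ∧ x ≤ n := fun x hx =>
      mem_Icc.1 (hE (hE' ▸ hx))
    refine ⟨⟨#q.1, a, b⟩, ⟨a.strictMono, b.strictMono,
      fun i => hmem _ (mem_union_left _ (orderEmbOfFin_mem _ _ i)),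
      fun i => hmem _ (mem_union_right _ (orderEmbOfFin_mem _ _ i)), ?_, ?_⟩, ?_⟩
    · rw [← dominates_image_iff a.strictMono b.strictMono]
      simpa [a, b] using hdom
    · simpa [a, b] using hE'
    · simp [termSets, a, b]

section DyckSubsets

variable {α β : Type*} [LinearOrder α] [LinearOrder β]

/-- The sets of up-steps of the Dyck paths whose steps are the elements of `T`, in order. -/
def dyckSubsets (T : Finset α) : Finset (Finset α) :=
  T.powerset.filter fun U => 2 * #U = #T ∧ Dominates U (T \ U)

lemma mem_dyckSubsets {T U : Finset α} :
    U ∈ dyckSubsets T ↔ U ⊆ T ∧ 2 * #U = #T ∧ Dominates U (T \ U) := by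
  rw [dyckSubsets, mem_filter, mem_powerset]

lemma card_dyckSubsets_map (f : α ↪o β) (T : Finset α) :
    #(dyckSubsets (T.map f.toEmbedding)) = #(dyckSubsets T) := by
  refine (card_bij (fun U _ => U.map f.toEmbedding) (fun U hU => ?_)
    (fun U _ V _ h => map_injective _ h) (fun V hV => ?_)).symm
  · obtain ⟨hUT, hcard, hdom⟩ := mem_dyckSubsets.1 hU
    refine mem_dyckSubsets.2 ⟨map_subset_map.2 hUT, by simpa using hcard, ?_⟩
    rwa [← Finset.map_sdiff, dominates_map_iff]
  · obtain ⟨hVT, hcard, hdom⟩ := mem_dyckSubsets.1 hV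
    obtain ⟨U, hUT, rfl⟩ := subset_map_iff.1 hVT
    refine ⟨U, mem_dyckSubsets.2 ⟨hUT, by simpa using hcard, ?_⟩, rfl⟩
    rwa [← Finset.map_sdiff, dominates_map_iff] at hdom

lemma card_dyckSubsets_eq_range (T : Finset α) :
    #(dyckSubsets T) = #(dyckSubsets (range #T)) := by
  have hrange : range #T = univ.map (Fin.valOrderEmb #T).toEmbedding := by
    rw [← Nat.Iio_eq_range, ← Fin.map_valEmbedding_univ]
    rfl
  rw [hrange, card_dyckSubsets_map, ← card_dyckSubsets_map (T.orderEmbOfFin rfl),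
    map_orderEmbOfFin_univ]

end DyckSubsets

section DyckWords

open DyckStep

def wordOf (m : ℕ) (S : Finset ℕ) : List DyckStep :=
  (List.range m).map fun i => if i ∈ S then U else D

def upSteps (w : List DyckStep) : Finset ℕ := (range w.length).filter (w[·]? = some U)

lemma take_wordOf (m i : ℕ) (S : Finset ℕ) : (wordOf m S).take i = wordOf (min i m) S := by
  rw [wordOf, wordOf, ← List.map_take, List.take_range]

lemma count_map_range {γ : Type*} [DecidableEq γ] (f : ℕ → γ) (c : γ) (j : ℕ) :
    ((List.range j).map f).count c = #((range j).filter (f · = c)) := by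
  induction j with
  | zero => rfl
  | succ j ih =>
    rw [List.range_succ, List.map_append, List.count_append, ih, range_add_one, filter_insert]
    split_ifs with h <;> simp [h]

lemma count_U_wordOf (j : ℕ) (S : Finset ℕ) : (wordOf j S).count U = #(S.filter (· < j)) := by
  rw [wordOf, count_map_range]
  congr 1
  ext i
  by_cases i ∈ S <;> simp [*]

lemma count_D_wordOf (j : ℕ) (S : Finset ℕ) : (wordOf j S).count D = #(range j \ S) := by
  rw [wordOf, count_map_range]
  congr 1
  ext i
  by_cases i ∈ S <;> simp [*]

lemma wordOf_upSteps {m : ℕ} {w : List DyckStep} (hw : w.length = m) :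
    wordOf m (upSteps w) = w := by
  subst hw
  apply List.ext_getElem (by simp [wordOf])
  intro i _ hi
  rcases w[i].dichotomy with h | h <;> simp [wordOf, upSteps, hi, h]

lemma upSteps_wordOf {m : ℕ} {S : Finset ℕ} (hS : S ⊆ range m) :
    upSteps (wordOf m S) = S := by
  ext i
  have := @hS i
  simp only [mem_range] at this
  simp [wordOf, upSteps]
  grind

lemma dominates_iff_wordOf {m : ℕ} {S : Finset ℕ} (hS : S ⊆ range m) :
    Dominates S (range m \ S) ↔
      ∀ i, ((wordOf m S).take i).count D ≤ ((wordOf m S).take i).count U := by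
  have key : ∀ t, #((range m \ S).filter (· ≤ t)) = #(range (min (t + 1) m) \ S) ∧
      #(S.filter (· ≤ t)) = #(S.filter (· < min (t + 1) m)) := fun t => by
    constructor <;> congr 1 <;> ext x <;> by_cases hx : x ∈ S
    · simp [hx]
    · simp [hx]
      omega
    · have := mem_range.1 (hS hx)
      simp [hx]
      omega
    · simp [hx]
  simp only [take_wordOf, count_U_wordOf, count_D_wordOf]
  refine ⟨fun h i => ?_, fun h t => ?_⟩
  · rcases Nat.eq_zero_or_pos (min i m) with h0 | h0
    · simp [h0]
    · obtain ⟨t, ht⟩ : ∃ t, min i m = min (t + 1) m := ⟨min i m - 1, by omega⟩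
      rw [ht, ← (key t).1, ← (key t).2]
      exact h t
  · rw [(key t).1, (key t).2]
    exact h (t + 1)

lemma mem_dyckSubsets_range {m : ℕ} {S : Finset ℕ} :
    S ∈ dyckSubsets (range m) ↔ S ⊆ range m ∧
      (wordOf m S).count U = (wordOf m S).count D ∧
      ∀ i, ((wordOf m S).take i).count D ≤ ((wordOf m S).take i).count U := by
  rw [mem_dyckSubsets, card_range]
  refine and_congr_right fun hS => and_congr ?_ (dominates_iff_wordOf hS)
  have := card_le_card hS
  rw [count_U_wordOf, filter_true_of_mem fun x hx => mem_range.1 (hS hx), count_D_wordOf,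
    card_sdiff_of_subset hS]
  rw [card_range] at this ⊢
  omega

def dyckSubsetsEquiv (r : ℕ) :
    dyckSubsets (range (2 * r)) ≃ {p : DyckWord // p.semilength = r} where
  toFun S :=
    have hS := mem_dyckSubsets_range.1 S.2
    ⟨⟨wordOf (2 * r) S, hS.2.1, hS.2.2⟩, by
      obtain ⟨hsub, hcard, -⟩ := mem_dyckSubsets.1 S.2
      change (wordOf (2 * r) S).count U = r
      rw [count_U_wordOf, filter_true_of_mem fun x hx => mem_range.1 (hsub hx)]
      rw [card_range] at hcard
      omega⟩
  invFun p := ⟨upSteps p.1.toList, by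
    have hlen : p.1.toList.length = 2 * r := by rw [← p.1.two_mul_semilength_eq_length, p.2]
    refine mem_dyckSubsets_range.2 ⟨hlen ▸ filter_subset _ _, ?_, ?_⟩ <;>
      rw [wordOf_upSteps hlen]
    exacts [p.1.count_U_eq_count_D, p.1.count_D_le_count_U]⟩
  left_inv S := Subtype.ext (upSteps_wordOf (mem_dyckSubsets.1 S.2).1)
  right_inv p := by
    have hlen : p.1.toList.length = 2 * r := by rw [← p.1.two_mul_semilength_eq_length, p.2]
    exact Subtype.ext (DyckWord.ext (wordOf_upSteps hlen))

lemma card_dyckSubsets_range (r : ℕ) : #(dyckSubsets (range (2 * r))) = catalan r := by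
  rw [← DyckWord.card_dyckWord_semilength_eq_catalan, ← Fintype.card_coe]
  exact Fintype.card_congr (dyckSubsetsEquiv r)

end DyckWords

section Counting

variable {α : Type*} [LinearOrder α]

lemma card_dyckSubsets (T : Finset α) :
    #(dyckSubsets T) = if Even #T then catalan (#T / 2) else 0 := by
  split_ifs with h
  · obtain ⟨r, hr⟩ := h
    rw [card_dyckSubsets_eq_range, hr, ← two_mul, card_dyckSubsets_range]
    congr 1
    omega
  · refine card_eq_zero.2 (filter_eq_empty_iff.2 fun U _ hU => h ⟨#U, by omega⟩)

lemma card_balancedPairs (E : Finset α) :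
    #(balancedPairs E) = ∑ T ∈ E.powerset, #(dyckSubsets T) := by
  rw [← card_sigma]
  refine card_nbij' (fun q => ⟨(q.1 \ q.2) ∪ (q.2 \ q.1), q.1 \ q.2⟩)
    (fun x => (E \ (x.1 \ x.2), E \ x.2)) (fun q hq => ?_) (fun x hx => ?_) (fun q hq => ?_)
    (fun x hx => ?_)
  · obtain ⟨hE, hcard, hdom⟩ := mem_balancedPairs.1 hq
    have hTU : ((q.1 \ q.2) ∪ (q.2 \ q.1)) \ (q.1 \ q.2) = q.2 \ q.1 := by grind
    refine mem_sigma.2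
      ⟨mem_powerset.2 (by grind), mem_dyckSubsets.2 ⟨subset_union_left, ?_, ?_⟩⟩
    · show 2 * #(q.1 \ q.2) = #((q.1 \ q.2) ∪ (q.2 \ q.1))
      have := card_sdiff_eq_card_sdiff_iff.2 hcard
      rw [card_union_of_disjoint disjoint_sdiff_sdiff]
      omega
    · rwa [hTU, dominates_sdiff_iff]
  · obtain ⟨hTE, hU⟩ := mem_sigma.1 hx
    obtain ⟨hUT, hcard, hdom⟩ := mem_dyckSubsets.1 hU
    have h1 : (E \ (x.1 \ x.2)) \ (E \ x.2) = x.2 := by grind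
    have h2 : (E \ x.2) \ (E \ (x.1 \ x.2)) = x.1 \ x.2 := by grind
    refine mem_balancedPairs.2 ⟨by grind, ?_, ?_⟩
    · rw [← card_sdiff_eq_card_sdiff_iff, h1, h2, card_sdiff_of_subset hUT]
      omega
    · rwa [← dominates_sdiff_iff, h1, h2]
  · obtain ⟨hE, -, -⟩ := mem_balancedPairs.1 hq
    ext x <;> grind
  · obtain ⟨hTE, hU⟩ := mem_sigma.1 hx
    have hUT := (mem_dyckSubsets.1 hU).1
    have h1 : (E \ (x.1 \ x.2)) \ (E \ x.2) = x.2 := by grind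
    refine Sigma.ext ?_ (heq_of_eq h1)
    dsimp only
    grind

lemma sum_card_dyckSubsets (E : Finset α) :
    ∑ T ∈ E.powerset, #(dyckSubsets T) = motzkin #E := by
  simp_rw [card_dyckSubsets]
  rw [sum_powerset_apply_card (fun j => if Even j then catalan (j / 2) else 0), motzkin]
  set s := #E
  calc ∑ j ∈ range (s + 1), s.choose j • (if Even j then catalan (j / 2) else 0)
      = ∑ j ∈ range (2 * s + 1), s.choose j • (if Even j then catalan (j / 2) else 0) := by
        refine sum_subset (range_subset_range.2 (by omega)) fun j _ hj => ?_
        rw [Nat.choose_eq_zero_of_lt (by simpa using hj), zero_smul]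
    _ = ∑ j ∈ (range (s + 1)).image (2 * ·),
          s.choose j • (if Even j then catalan (j / 2) else 0) := by
        refine (sum_subset (fun j => by simp; omega) fun j hj hj' => ?_).symm
        rw [mem_range] at hj
        rw [if_neg fun ⟨r, hr⟩ => hj' (mem_image.2 ⟨r, mem_range.2 (by omega), by omega⟩),
          smul_zero]
    _ = ∑ r ∈ range (s + 1), s.choose (2 * r) * catalan r := by
        rw [sum_image fun r _ r' _ h => by simpa using h]
        simp

end Counting

/-- Theorem 5.1.  For `g = sl_{n+1}(ℂ)`:
(1) if `c` is an ad-nilpotent ideal with generator set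
`Γ(c) = {(i₁,j₁),…,(i_k,j_k)}`, then
`n_g(c) = p({i₁,…,i_k} ∪ {j₁-1,…,j_k-1})`;
(2) for `E ⊆ [n]`, the map `(a,b) ↦` (ideal with generators `{(a_i, b_i+1)}`) is a
bijection from the pairs of sequences as in `GoodPair` onto the set of ideals with
`n_g(c) = p(E)`;
(3) if `#E = s`, then the number of ad-nilpotent ideals with `n_g(c) = p(E)` equals
the Motzkin number `M_s`; in particular it depends only on `s = n - srk p(E)`. -/
theorem normalizers_of_ideals_in_sl (n : ℕ) :
    (∀ I G : Finset (ℕ × ℕ), IsUpperIdeal n I →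
      (∀ p, p ∈ G ↔ IsGenerator I p) →
      NormalizerEq n I ((G.image Prod.fst) ∪ (G.image fun p => p.2 - 1))) ∧
    (∀ E : Finset ℕ, E ⊆ Finset.Icc 1 n →
      Set.BijOn (idealOfPair n) {s | GoodPair n E s}
        {I : Finset (ℕ × ℕ) | IsUpperIdeal n I ∧ NormalizerEq n I E}) ∧
    (∀ E : Finset ℕ, E ⊆ Finset.Icc 1 n →
      {I : Finset (ℕ × ℕ) | IsUpperIdeal n I ∧ NormalizerEq n I E}.ncard =
        motzkin E.card) := by
  refine ⟨fun I G hI hG => hI.normalizerEq_generators hG, fun E hE => bijOn_idealOfPair hE,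
    fun E hE => ?_⟩
  rw [← (bijOn_idealOfPair hE).ncard_eq, (bijOn_termSets hE).ncard_eq, Set.ncard_coe_finset,
    card_balancedPairs, sum_card_dyckSubsets]

end SLModel
end
end

section
/- For g = sl_{n+1}(ℂ), an ad-nilpotent ideal c is minimax if and only if the normalizer of its dual ideal is the Borel: n_g(c*) = b. -/
open scoped Classical

noncomputable section

namespace SLModel

/-- For a generator set `Γ(c) = {(i₁,j₁),…,(i_k,j_k)}`, `X(c) = {i₁,…,i_k}`. -/
def Xset (G : Finset (ℕ × ℕ)) : Finset ℕ := G.image Prod.fst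

/-- For a generator set `Γ(c) = {(i₁,j₁),…,(i_k,j_k)}`, `Ỹ(c) = {j₁-1,…,j_k-1}`. -/
def Yset (G : Finset (ℕ × ℕ)) : Finset ℕ := G.image fun p => p.2 - 1

section Helpers

variable {n : ℕ} {I G : Finset (ℕ × ℕ)}

/-- If `(l,j) ∈ I` but `(l+1,j) ∉ I`, then `I` has a generator with first
coordinate `l`.  (Fueled strong induction on `j`.) -/
lemma gen_first (hI : IsUpperIdeal n I) (hG : ∀ p, p ∈ G ↔ IsGenerator I p) :
    ∀ d j l, j ≤ d → (l, j) ∈ I → (l + 1, j) ∉ I → ∃ j', (l, j') ∈ G := by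
  intro d
  induction d with
  | zero =>
    intro j l hj hmem _
    have h := hI.1 _ hmem
    simp only [IsPosRoot] at h
    omega
  | succ d ih =>
    intro j l hj hmem hnot
    by_cases hgen : IsGenerator I (l, j)
    · exact ⟨j, (hG _).2 hgen⟩
    · simp only [IsGenerator, not_and, not_forall] at hgen
      obtain ⟨q, hqI, hq1, hq2, hqne⟩ := hgen hmem
      have hposq := hI.1 q hqI
      simp only [IsPosRoot] at hposq
      have hposj := hI.1 _ hmem
      simp only [IsPosRoot] at hposj
      by_cases hc : l + 1 ≤ q.1
      · exfalso
        apply hnot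
        exact hI.2 q hqI (l + 1, j) ⟨by omega, by omega, by omega⟩ hc hq2
      · have hq1l : q.1 = l := by omega
        have hq2lt : q.2 < j := by
          rcases lt_or_eq_of_le hq2 with h | h
          · exact h
          · exfalso; apply hqne; ext <;> simp [hq1l, h]
        have hqeq : q = (l, q.2) := by ext <;> simp [hq1l]
        have hnot' : (l + 1, q.2) ∉ I := by
          intro hmem'
          apply hnot
          exact hI.2 _ hmem' (l + 1, j) ⟨by omega, by omega, by omega⟩
            (by simp) (by simpa using le_of_lt hq2lt)
        exact ih q.2 l (by omega) (hqeq ▸ hqI) hnot'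

/-- If `(i,l+1) ∈ I` but `(i,l) ∉ I`, then `I` has a generator with second
coordinate `l+1`.  (Fueled induction on `l+1-i`.) -/
lemma gen_second (hI : IsUpperIdeal n I) (hG : ∀ p, p ∈ G ↔ IsGenerator I p) :
    ∀ d i l, l + 1 ≤ i + d → (i, l + 1) ∈ I → (i, l) ∉ I →
      ∃ i', (i', l + 1) ∈ G := by
  intro d
  induction d with
  | zero =>
    intro i l hd hmem _
    have h := hI.1 _ hmem
    simp only [IsPosRoot] at h
    omega
  | succ d ih =>
    intro i l hd hmem hnot
    by_cases hgen : IsGenerator I (i, l + 1)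
    · exact ⟨i, (hG _).2 hgen⟩
    · simp only [IsGenerator, not_and, not_forall] at hgen
      obtain ⟨q, hqI, hq1, hq2, hqne⟩ := hgen hmem
      have hposq := hI.1 q hqI
      simp only [IsPosRoot] at hposq
      have hposi := hI.1 _ hmem
      simp only [IsPosRoot] at hposi
      by_cases hc : q.2 ≤ l
      · exfalso
        apply hnot
        exact hI.2 q hqI (i, l) ⟨by omega, by omega, by omega⟩ hq1 hc
      · have hq2l : q.2 = l + 1 := by omega
        have hq1gt : i < q.1 := by
          rcases lt_or_eq_of_le hq1 with h | h
          · exact h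
          · exfalso; apply hqne; ext <;> simp [← h, hq2l]
        have hqeq : q = (q.1, l + 1) := by ext <;> simp [hq2l]
        have hnot' : (q.1, l) ∉ I := by
          intro hmem'
          apply hnot
          exact hI.2 _ hmem' (i, l) ⟨by omega, by omega, by omega⟩
            (by simpa using le_of_lt hq1gt) (by simp)
        exact ih q.1 l (by omega) (hqeq ▸ hqI) hnot'

/-- Key combinatorial lemma: `g_{-α_l}` fails to normalize the ideal with root
set `I` iff `l ∈ X(G) ∪ Ỹ(G)`. -/
lemma nsn_iff (hI : IsUpperIdeal n I) (hG : ∀ p, p ∈ G ↔ IsGenerator I p)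
    (l : ℕ) :
    ¬ NegSimpleInNormalizer I l ↔ (l ∈ Xset G ∨ l ∈ Yset G) := by
  constructor
  · intro hnsn
    by_cases hA : (l, l + 1) ∈ I
    · -- `(l, l+1)` is itself a generator
      have hgen : IsGenerator I (l, l + 1) := by
        refine ⟨hA, fun q hq h1 h2 => ?_⟩
        have hposq := hI.1 q hq
        simp only [IsPosRoot] at hposq
        ext <;> simp <;> omega
      left
      exact Finset.mem_image.2 ⟨(l, l + 1), (hG _).2 hgen, rfl⟩
    · by_cases hB : ∀ p ∈ I, p.1 = l → l + 1 < p.2 → (l + 1, p.2) ∈ I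
      · -- the third condition must fail
        have hC : ¬ ∀ p ∈ I, p.2 = l + 1 → p.1 < l → (p.1, l) ∈ I := by
          intro hC; exact hnsn ⟨hA, hB, hC⟩
        push_neg at hC
        obtain ⟨p, hpI, hp2, hp1, hpnot⟩ := hC
        have hpeq : p = (p.1, l + 1) := by ext <;> simp [hp2]
        obtain ⟨i', hi'⟩ := gen_second hI hG (l + 1) p.1 l (by omega)
          (hpeq ▸ hpI) hpnot
        right
        exact Finset.mem_image.2 ⟨(i', l + 1), hi', by simp⟩
      · push_neg at hB
        obtain ⟨p, hpI, hp1, hp2, hpnot⟩ := hB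
        have hpeq : p = (l, p.2) := by ext <;> simp [hp1]
        obtain ⟨j', hj'⟩ := gen_first hI hG p.2 p.2 l le_rfl (hpeq ▸ hpI) hpnot
        left
        exact Finset.mem_image.2 ⟨(l, j'), hj', rfl⟩
  · rintro (hX | hY) ⟨h1, h2, h3⟩
    · obtain ⟨p, hpG, hp1⟩ := Finset.mem_image.1 hX
      have hgen := (hG p).1 hpG
      have hposp := hI.1 p hgen.1
      simp only [IsPosRoot] at hposp
      have hpeq : p = (l, p.2) := by ext <;> simp [hp1]
      by_cases hc : p.2 = l + 1
      · exact h1 (by rw [← hc, ← hpeq]; exact hgen.1)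
      · have hlt : l + 1 < p.2 := by omega
        have hmem : (l + 1, p.2) ∈ I := h2 p hgen.1 hp1 hlt
        have := hgen.2 (l + 1, p.2) hmem (by omega) le_rfl
        have h1' := congrArg Prod.fst this
        simp only at h1'
        omega
    · obtain ⟨p, hpG, hp2⟩ := Finset.mem_image.1 hY
      have hgen := (hG p).1 hpG
      have hposp := hI.1 p hgen.1
      simp only [IsPosRoot] at hposp
      have hp2' : p.2 = l + 1 := by omega
      by_cases hc : p.1 = l
      · apply h1
        have : p = (l, l + 1) := by ext <;> simp [hc, hp2']
        exact this ▸ hgen.1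
      · have hlt : p.1 < l := by omega
        have hmem : (p.1, l) ∈ I := h3 p hgen.1 hp2' hlt
        have := hgen.2 (p.1, l) hmem le_rfl (by omega)
        have h2' := congrArg Prod.snd this
        simp [hp2'] at h2'

end Helpers

/-- Theorem 5.3.  For `g = sl_{n+1}(ℂ)`, an ad-nilpotent ideal
`c` is minimax (i.e. `w_{min,c} = w_{max,c}`; for `sl_{n+1}` this is equivalent to
`X(c) ∩ Ỹ(c) = ∅`) if and only if the normalizer of the dual ideal `c*` is the
Borel subalgebra: `n_g(c*) = b`.  Here `I, I'` are the root sets of `c, c*`, with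
generator sets `G, G'`, and `c*` is characterized by `X(c*) = [n] ∖ Ỹ(c)`,
`Ỹ(c*) = [n] ∖ X(c)`. -/
theorem minimax_iff_dual_normalizer_borel (n : ℕ) (I I' G G' : Finset (ℕ × ℕ))
    (hI : IsUpperIdeal n I) (hI' : IsUpperIdeal n I')
    (hG : ∀ p, p ∈ G ↔ IsGenerator I p) (hG' : ∀ p, p ∈ G' ↔ IsGenerator I' p)
    (hdualX : Xset G' = Finset.Icc 1 n \ Yset G)
    (hdualY : Yset G' = Finset.Icc 1 n \ Xset G) :
    (Xset G ∩ Yset G = ∅ ↔ NormalizerIsBorel n I') := by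
  have hXsub : Xset G ⊆ Finset.Icc 1 n := by
    intro l hl
    obtain ⟨p, hpG, hp1⟩ := Finset.mem_image.1 hl
    have hposp := hI.1 p ((hG p).1 hpG).1
    simp only [IsPosRoot] at hposp
    simp only [Finset.mem_Icc]
    omega
  have hYsub : Yset G ⊆ Finset.Icc 1 n := by
    intro l hl
    obtain ⟨p, hpG, hp2⟩ := Finset.mem_image.1 hl
    have hposp := hI.1 p ((hG p).1 hpG).1
    simp only [IsPosRoot] at hposp
    simp only [Finset.mem_Icc]
    omega
  constructor
  · intro hmm l hl1 hln
    rw [nsn_iff hI' hG' l, hdualX, hdualY]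
    by_cases hx : l ∈ Xset G
    · left
      simp only [Finset.mem_sdiff, Finset.mem_Icc]
      refine ⟨⟨hl1, hln⟩, fun hy => ?_⟩
      have : l ∈ Xset G ∩ Yset G := Finset.mem_inter.2 ⟨hx, hy⟩
      rw [hmm] at this
      exact absurd this (Finset.notMem_empty l)
    · right
      simp only [Finset.mem_sdiff, Finset.mem_Icc]
      exact ⟨⟨hl1, hln⟩, hx⟩
  · intro hb
    rw [Finset.eq_empty_iff_forall_notMem]
    intro l hl
    obtain ⟨hx, hy⟩ := Finset.mem_inter.1 hl
    have hmem := hXsub hx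
    simp only [Finset.mem_Icc] at hmem
    have hnsn := hb l hmem.1 hmem.2
    rw [nsn_iff hI' hG' l, hdualX, hdualY] at hnsn
    rcases hnsn with h | h <;> simp only [Finset.mem_sdiff] at h
    · exact h.2 hy
    · exact h.2 hx

end SLModel
end
end

section
/- For g = sl_{n+1}(ℂ), an ad-nilpotent ideal c is self-dual (c = c*) if and only if c is minimax and n_g(c) = b. -/
open scoped Classical

noncomputable section

namespace SLModel

section Aux

variable {n : ℕ} {I G : Finset (ℕ × ℕ)}

lemma gen_eq (hG : ∀ p, p ∈ G ↔ IsGenerator I p) {p q : ℕ × ℕ}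
    (hp : p ∈ G) (hq : q ∈ G) (h1 : p.1 ≤ q.1) (h2 : q.2 ≤ p.2) : q = p :=
  ((hG p).1 hp).2 q ((hG q).1 hq).1 h1 h2

lemma gen_pos (hI : IsUpperIdeal n I) (hG : ∀ p, p ∈ G ↔ IsGenerator I p)
    {g : ℕ × ℕ} (hg : g ∈ G) : IsPosRoot n g :=
  hI.1 g ((hG g).1 hg).1

lemma gen_comono (hG : ∀ p, p ∈ G ↔ IsGenerator I p) {p q : ℕ × ℕ}
    (hp : p ∈ G) (hq : q ∈ G) (h : p.1 < q.1) : p.2 < q.2 := by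
  by_contra hle
  push_neg at hle
  have heq := gen_eq hG hp hq h.le hle
  subst heq
  exact lt_irrefl _ h

lemma gen_fst_injOn (hG : ∀ p, p ∈ G ↔ IsGenerator I p) :
    Set.InjOn Prod.fst (G : Set (ℕ × ℕ)) := by
  intro p hp q hq h
  simp only [Finset.mem_coe] at hp hq
  rcases le_total p.2 q.2 with h2 | h2
  · exact gen_eq hG hq hp h.ge h2
  · exact (gen_eq hG hp hq h.le h2).symm

lemma gen_sub_injOn (hI : IsUpperIdeal n I) (hG : ∀ p, p ∈ G ↔ IsGenerator I p) :
    Set.InjOn (fun p : ℕ × ℕ => p.2 - 1) (G : Set (ℕ × ℕ)) := by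
  intro p hp q hq h
  simp only [Finset.mem_coe] at hp hq
  have hp' := gen_pos hI hG hp
  have hq' := gen_pos hI hG hq
  unfold IsPosRoot at hp' hq'
  simp only at h
  have h2 : p.2 = q.2 := by omega
  rcases le_total p.1 q.1 with h1 | h1
  · exact (gen_eq hG hp hq h1 h2.ge).symm
  · exact gen_eq hG hq hp h1 h2.le

lemma Xset_card (hG : ∀ p, p ∈ G ↔ IsGenerator I p) : (Xset G).card = G.card :=
  Finset.card_image_of_injOn (gen_fst_injOn hG)

lemma Yset_card (hI : IsUpperIdeal n I) (hG : ∀ p, p ∈ G ↔ IsGenerator I p) :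
    (Yset G).card = G.card :=
  Finset.card_image_of_injOn (gen_sub_injOn hI hG)

lemma exists_gen_aux (hI : IsUpperIdeal n I) (hG : ∀ p, p ∈ G ↔ IsGenerator I p) :
    ∀ m (p : ℕ × ℕ), p ∈ I → p.2 - p.1 ≤ m → ∃ g ∈ G, p.1 ≤ g.1 ∧ g.2 ≤ p.2 := by
  intro m
  induction m with
  | zero =>
    intro p hp hle
    have hpos := hI.1 p hp
    unfold IsPosRoot at hpos
    exact absurd hle (by omega)
  | succ m ih =>
    intro p hp hle
    by_cases hgen : IsGenerator I p
    · exact ⟨p, (hG p).2 hgen, le_refl _, le_refl _⟩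
    · have hex : ∃ q ∈ I, p.1 ≤ q.1 ∧ q.2 ≤ p.2 ∧ q ≠ p := by
        by_contra hc
        push_neg at hc
        exact hgen ⟨hp, fun q hq h1 h2 => hc q hq h1 h2⟩
      obtain ⟨q, hqI, h1, h2, hne⟩ := hex
      have hqpos := hI.1 q hqI
      have hppos := hI.1 p hp
      unfold IsPosRoot at hqpos hppos
      have hne' : p.1 ≠ q.1 ∨ p.2 ≠ q.2 := by
        by_contra h
        push_neg at h
        exact hne (Prod.ext h.1.symm h.2.symm)
      have hq2 : q.2 - q.1 ≤ m := by omega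
      obtain ⟨g, hg, hg1, hg2⟩ := ih q hqI hq2
      exact ⟨g, hg, le_trans h1 hg1, le_trans hg2 h2⟩

lemma mem_ideal_iff (hI : IsUpperIdeal n I) (hG : ∀ p, p ∈ G ↔ IsGenerator I p)
    (p : ℕ × ℕ) : p ∈ I ↔ IsPosRoot n p ∧ ∃ g ∈ G, p.1 ≤ g.1 ∧ g.2 ≤ p.2 := by
  constructor
  · intro hp
    exact ⟨hI.1 p hp, exists_gen_aux hI hG (p.2 - p.1) p hp le_rfl⟩
  · rintro ⟨hpos, g, hg, h1, h2⟩
    exact hI.2 g ((hG g).1 hg).1 p hpos h1 h2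

lemma count_lemma (hI : IsUpperIdeal n I) (hG : ∀ p, p ∈ G ↔ IsGenerator I p)
    (i j : ℕ) (hj : 1 ≤ j) :
    (∃ g ∈ G, i ≤ g.1 ∧ g.2 ≤ j) ↔
      G.card < ((Xset G).filter (fun x => i ≤ x)).card +
        ((Yset G).filter (fun y => y ≤ j - 1)).card := by
  set A := G.filter (fun g => i ≤ g.1) with hA
  set B := G.filter (fun g => g.2 ≤ j) with hB
  have hAcard : ((Xset G).filter (fun x => i ≤ x)).card = A.card := by
    unfold Xset
    rw [Finset.filter_image]
    exact Finset.card_image_of_injOn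
      ((gen_fst_injOn hG).mono (Finset.coe_subset.2 (Finset.filter_subset _ _)))
  have hBcard : ((Yset G).filter (fun y => y ≤ j - 1)).card = B.card := by
    unfold Yset
    rw [Finset.filter_image]
    have hfe : (G.filter fun a => a.2 - 1 ≤ j - 1) = B := by
      apply Finset.filter_congr
      intro g hg
      have := gen_pos hI hG hg
      unfold IsPosRoot at this
      omega
    rw [hfe, hB]
    exact Finset.card_image_of_injOn
      ((gen_sub_injOn hI hG).mono (Finset.coe_subset.2 (Finset.filter_subset _ _)))
  rw [hAcard, hBcard]
  have hsub : A ∪ B ⊆ G :=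
    Finset.union_subset (Finset.filter_subset _ _) (Finset.filter_subset _ _)
  constructor
  · rintro ⟨g₀, hg₀, h1, h2⟩
    have hunion : A ∪ B = G := by
      apply Finset.Subset.antisymm hsub
      intro g hg
      by_cases hi : i ≤ g.1
      · exact Finset.mem_union_left _ (Finset.mem_filter.2 ⟨hg, hi⟩)
      · have hlt : g.1 < g₀.1 := by omega
        have := gen_comono hG hg hg₀ hlt
        exact Finset.mem_union_right _ (Finset.mem_filter.2 ⟨hg, by omega⟩)
    have hinter : g₀ ∈ A ∩ B :=
      Finset.mem_inter.2 ⟨Finset.mem_filter.2 ⟨hg₀, h1⟩, Finset.mem_filter.2 ⟨hg₀, h2⟩⟩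
    have hcard := Finset.card_union_add_card_inter A B
    rw [hunion] at hcard
    have hpos : 1 ≤ (A ∩ B).card := Finset.card_pos.2 ⟨g₀, hinter⟩
    omega
  · intro hlt
    have hle : (A ∪ B).card ≤ G.card := Finset.card_le_card hsub
    have hcard := Finset.card_union_add_card_inter A B
    have hne : (A ∩ B).Nonempty := Finset.card_pos.1 (by omega)
    obtain ⟨g, hg⟩ := hne
    rw [Finset.mem_inter, Finset.mem_filter, Finset.mem_filter] at hg
    exact ⟨g, hg.1.1, hg.1.2, hg.2.2⟩

lemma mem_ideal_iff_count (hI : IsUpperIdeal n I) (hG : ∀ p, p ∈ G ↔ IsGenerator I p)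
    (p : ℕ × ℕ) : p ∈ I ↔ IsPosRoot n p ∧
      G.card < ((Xset G).filter (fun x => p.1 ≤ x)).card +
        ((Yset G).filter (fun y => y ≤ p.2 - 1)).card := by
  rw [mem_ideal_iff hI hG]
  constructor
  · rintro ⟨hpos, hex⟩
    refine ⟨hpos, ?_⟩
    rw [← count_lemma hI hG p.1 p.2 (by unfold IsPosRoot at hpos; omega)]
    exact hex
  · rintro ⟨hpos, hc⟩
    refine ⟨hpos, ?_⟩
    rw [count_lemma hI hG p.1 p.2 (by unfold IsPosRoot at hpos; omega)]
    exact hc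

lemma negSimple_iff (hI : IsUpperIdeal n I) (hG : ∀ p, p ∈ G ↔ IsGenerator I p)
    (l : ℕ) (hl1 : 1 ≤ l) (hln : l ≤ n) :
    NegSimpleInNormalizer I l ↔ l ∉ Xset G ∪ Yset G := by
  constructor
  · intro hns hmem
    rw [Finset.mem_union] at hmem
    rcases hmem with hx | hy
    · obtain ⟨g, hg, hfst⟩ := Finset.mem_image.1 hx
      have hgpos := gen_pos hI hG hg
      have hgI := ((hG g).1 hg).1
      unfold IsPosRoot at hgpos
      by_cases h2 : g.2 = l + 1
      · have hgeq : g = (l, l+1) := Prod.ext hfst h2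
        exact hns.1 (hgeq ▸ hgI)
      · have hlt : l + 1 < g.2 := by omega
        have hmem2 := hns.2.1 g hgI hfst hlt
        rw [mem_ideal_iff hI hG] at hmem2
        obtain ⟨_, g', hg', h1', h2'⟩ := hmem2
        have ha : l + 1 ≤ g'.1 := h1'
        have hb : g'.2 ≤ g.2 := h2'
        have hlt2 : g.1 < g'.1 := by omega
        have := gen_comono hG hg hg' hlt2
        omega
    · obtain ⟨g, hg, hsnd⟩ := Finset.mem_image.1 hy
      have hgpos := gen_pos hI hG hg
      have hgI := ((hG g).1 hg).1
      unfold IsPosRoot at hgpos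
      have hg2 : g.2 = l + 1 := by omega
      by_cases h1 : g.1 = l
      · have hgeq : g = (l, l+1) := Prod.ext h1 hg2
        exact hns.1 (hgeq ▸ hgI)
      · have hlt : g.1 < l := by omega
        have hmem2 := hns.2.2 g hgI hg2 hlt
        rw [mem_ideal_iff hI hG] at hmem2
        obtain ⟨_, g', hg', h1', h2'⟩ := hmem2
        have ha : g.1 ≤ g'.1 := h1'
        have hb : g'.2 ≤ l := h2'
        rcases lt_trichotomy g.1 g'.1 with h | h | h
        · have := gen_comono hG hg hg' h
          omega
        · have hgg : g = g' :=
            gen_fst_injOn hG (Finset.mem_coe.2 hg) (Finset.mem_coe.2 hg') h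
          rw [hgg] at hg2
          omega
        · omega
  · intro hnmem
    have hnX : l ∉ Xset G := fun h => hnmem (Finset.mem_union_left _ h)
    have hnY : l ∉ Yset G := fun h => hnmem (Finset.mem_union_right _ h)
    refine ⟨?_, ?_, ?_⟩
    · intro hmem
      rw [mem_ideal_iff hI hG] at hmem
      obtain ⟨_, g, hg, h1, h2⟩ := hmem
      have h1' : l ≤ g.1 := h1
      have h2' : g.2 ≤ l + 1 := h2
      have hgpos := gen_pos hI hG hg
      unfold IsPosRoot at hgpos
      have : g.1 = l := by omega
      exact hnX (Finset.mem_image.2 ⟨g, hg, this⟩)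
    · intro p hp hp1 hp2
      have hppos := hI.1 p hp
      unfold IsPosRoot at hppos
      rw [mem_ideal_iff hI hG] at hp ⊢
      obtain ⟨_, g, hg, h1, h2⟩ := hp
      have hg1 : g.1 ≠ l := fun h => hnX (Finset.mem_image.2 ⟨g, hg, h⟩)
      refine ⟨?_, g, hg, ?_, ?_⟩
      · show 1 ≤ l + 1 ∧ l + 1 < p.2 ∧ p.2 ≤ n + 1
        omega
      · show l + 1 ≤ g.1
        omega
      · show g.2 ≤ p.2
        exact h2
    · intro p hp hp2 hp1
      have hppos := hI.1 p hp
      unfold IsPosRoot at hppos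
      rw [mem_ideal_iff hI hG] at hp ⊢
      obtain ⟨_, g, hg, h1, h2⟩ := hp
      have hgpos := gen_pos hI hG hg
      unfold IsPosRoot at hgpos
      have hg2 : g.2 - 1 ≠ l := fun h => hnY (Finset.mem_image.2 ⟨g, hg, h⟩)
      refine ⟨?_, g, hg, ?_, ?_⟩
      · show 1 ≤ p.1 ∧ p.1 < l ∧ l ≤ n + 1
        omega
      · show p.1 ≤ g.1
        exact h1
      · show g.2 ≤ l
        omega

lemma Xset_subset (hI : IsUpperIdeal n I) (hG : ∀ p, p ∈ G ↔ IsGenerator I p) :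
    Xset G ⊆ Finset.Icc 1 n := by
  intro x hx
  obtain ⟨g, hg, rfl⟩ := Finset.mem_image.1 hx
  have := gen_pos hI hG hg
  unfold IsPosRoot at this
  rw [Finset.mem_Icc]
  omega

lemma Yset_subset (hI : IsUpperIdeal n I) (hG : ∀ p, p ∈ G ↔ IsGenerator I p) :
    Yset G ⊆ Finset.Icc 1 n := by
  intro y hy
  obtain ⟨g, hg, rfl⟩ := Finset.mem_image.1 hy
  have := gen_pos hI hG hg
  unfold IsPosRoot at this
  rw [Finset.mem_Icc]
  omega

end Aux

/-- Corollary 5.4.  For `g = sl_{n+1}(ℂ)`, an ad-nilpotent ideal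
`c` is self-dual (`c = c*`) if and only if `c` is minimax (equivalently, for
`sl_{n+1}`: `X(c) ∩ Ỹ(c) = ∅`) and `n_g(c) = b`.  Here `I, I'` are the root sets
of `c, c*`, with generator sets `G, G'`, and `c*` is characterized by
`X(c*) = [n] ∖ Ỹ(c)`, `Ỹ(c*) = [n] ∖ X(c)`. -/
theorem selfdual_iff_minimax_and_normalizer_borel (n : ℕ)
    (I I' G G' : Finset (ℕ × ℕ))
    (hI : IsUpperIdeal n I) (hI' : IsUpperIdeal n I')
    (hG : ∀ p, p ∈ G ↔ IsGenerator I p) (hG' : ∀ p, p ∈ G' ↔ IsGenerator I' p)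
    (hdualX : Xset G' = Finset.Icc 1 n \ Yset G)
    (hdualY : Yset G' = Finset.Icc 1 n \ Xset G) :
    (I = I' ↔ (Xset G ∩ Yset G = ∅ ∧ NormalizerIsBorel n I)) := by
  have hXsub := Xset_subset hI hG
  have hYsub := Yset_subset hI hG
  constructor
  · intro h
    have hGG : G = G' := by
      ext p; rw [hG, hG', h]
    rw [← hGG] at hdualX hdualY
    constructor
    · rw [hdualX]
      exact Finset.sdiff_inter_self _ _
    · intro l hl1 hln hns
      rw [negSimple_iff hI hG l hl1 hln] at hns
      have hlIcc : l ∈ Finset.Icc 1 n := Finset.mem_Icc.2 ⟨hl1, hln⟩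
      by_cases hy : l ∈ Yset G
      · exact hns (Finset.mem_union_right _ hy)
      · have hx : l ∈ Xset G := by
          rw [hdualX]; exact Finset.mem_sdiff.2 ⟨hlIcc, hy⟩
        exact hns (Finset.mem_union_left _ hx)
  · rintro ⟨hdisj, hbor⟩
    have hcover : Finset.Icc 1 n ⊆ Xset G ∪ Yset G := by
      intro l hl
      rw [Finset.mem_Icc] at hl
      by_contra hn
      exact hbor l hl.1 hl.2 ((negSimple_iff hI hG l hl.1 hl.2).2 hn)
    have hXeq : Finset.Icc 1 n \ Yset G = Xset G := by
      ext l
      simp only [Finset.mem_sdiff]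
      constructor
      · rintro ⟨hl, hny⟩
        rcases Finset.mem_union.1 (hcover hl) with h | h
        · exact h
        · exact absurd h hny
      · intro hx
        refine ⟨hXsub hx, fun hy => ?_⟩
        have hm : l ∈ Xset G ∩ Yset G := Finset.mem_inter.2 ⟨hx, hy⟩
        rw [hdisj] at hm
        exact absurd hm (Finset.notMem_empty l)
    have hYeq : Finset.Icc 1 n \ Xset G = Yset G := by
      ext l
      simp only [Finset.mem_sdiff]
      constructor
      · rintro ⟨hl, hnx⟩
        rcases Finset.mem_union.1 (hcover hl) with h | h
        · exact absurd h hnx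
        · exact h
      · intro hy
        refine ⟨hYsub hy, fun hx => ?_⟩
        have hm : l ∈ Xset G ∩ Yset G := Finset.mem_inter.2 ⟨hx, hy⟩
        rw [hdisj] at hm
        exact absurd hm (Finset.notMem_empty l)
    rw [hXeq] at hdualX
    rw [hYeq] at hdualY
    have hcard : G'.card = G.card := by
      rw [← Xset_card hG', ← Xset_card hG, hdualX]
    ext p
    rw [mem_ideal_iff_count hI hG p, mem_ideal_iff_count hI' hG' p, hdualX, hdualY, hcard]

end SLModel
end
end
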